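/- arXiv:1702.02702 — 12 statements merged into one kernel-verified Lean document; each statement's English description precedes it below -/
import Mathlib

section
/- Let K be a Fraïssé structure, A ⊆ B finite substructures of K, and f ∈ Emb(A,B). Then for every S ⊆ Emb(A,K): S is large iff f(S) is large; S is unavoidable iff f(S) is unavoidable; S is somewhere unavoidable iff f(S) is somewhere unavoidable; and S is scattered iff f(S) is scattered. -/
open FirstOrder Language Set Function

/-- A subset `S ⊆ Emb(A,K)` is *large* if `η⁻¹(S) = Emb(A,K)` for some self-embedding `η` of `K`. -/
def EmbLarge {L : Language} {K : Type*} {A : Type*} [L.Structure K] [L.Structure A]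
    (S : Set (A ↪[L] K)) : Prop :=
  ∃ η : K ↪[L] K, ∀ f : A ↪[L] K, η.comp f ∈ S

/-- A subset `S ⊆ Emb(A,K)` is *unavoidable* if `η⁻¹(S) ≠ ∅` for every self-embedding `η` of `K`. -/
def EmbUnavoidable {L : Language} {K : Type*} {A : Type*} [L.Structure K] [L.Structure A]
    (S : Set (A ↪[L] K)) : Prop :=
  ∀ η : K ↪[L] K, ∃ f : A ↪[L] K, η.comp f ∈ S

/-- A subset `S ⊆ Emb(A,K)` is *somewhere unavoidable* if `η⁻¹(S)` is unavoidable for some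
self-embedding `η` of `K`. -/
def EmbSomewhereUnavoidable {L : Language} {K : Type*} {A : Type*} [L.Structure K]
    [L.Structure A] (S : Set (A ↪[L] K)) : Prop :=
  ∃ η : K ↪[L] K, EmbUnavoidable {f : A ↪[L] K | η.comp f ∈ S}

/-- A subset `S ⊆ Emb(A,K)` is *scattered* if it is not somewhere unavoidable. -/
def EmbScattered {L : Language} {K : Type*} {A : Type*} [L.Structure K] [L.Structure A]
    (S : Set (A ↪[L] K)) : Prop :=
  ¬ EmbSomewhereUnavoidable S

/-- Let `K` be a Fraïssé structure, `A ⊆ B` finite substructures, `f ∈ Emb(A,B)`.  For every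
`S ⊆ Emb(A,K)`: `S` is large (resp. unavoidable, somewhere unavoidable, scattered) iff
`f(S) := f̂⁻¹(S) = {s ∈ Emb(B,K) : s∘f ∈ S}` has the corresponding property. -/
theorem embSetProperties_iff_dualPreimage {L : Language} {K : Type*} [L.Structure K]
    [Countable K] [L.IsRelational] [Countable L.Symbols]
    (hK : L.IsUltrahomogeneous K)
    (A B : L.Substructure K) (hA : (A : Set K).Finite) (hB : (B : Set K).Finite)
    (hAB : A ≤ B) (f : ↥A ↪[L] ↥B) (S : Set (↥A ↪[L] K)) :
    (EmbLarge S ↔ EmbLarge {s : ↥B ↪[L] K | s.comp f ∈ S}) ∧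
    (EmbUnavoidable S ↔ EmbUnavoidable {s : ↥B ↪[L] K | s.comp f ∈ S}) ∧
    (EmbSomewhereUnavoidable S ↔ EmbSomewhereUnavoidable {s : ↥B ↪[L] K | s.comp f ∈ S}) ∧
    (EmbScattered S ↔ EmbScattered {s : ↥B ↪[L] K | s.comp f ∈ S}) := by

  -- `A` is a finitely generated structure
  have hAfin : Finite ↥A := hA.to_subtype
  have hAfg : Structure.FG L ↥A := Structure.fg_iff_finite.2 hAfin
  have hne : Nonempty (↥B ↪[L] K) := ⟨B.subtype⟩
  -- surjectivity of the dual map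
  have surj : ∀ g : ↥A ↪[L] K, ∃ s : ↥B ↪[L] K, g = s.comp f := fun g =>
    hK.extend_embedding hAfg g f
  -- unavoidability equivalence, for arbitrary sets
  have key : ∀ T : Set (↥A ↪[L] K),
      EmbUnavoidable T ↔ EmbUnavoidable {s : ↥B ↪[L] K | s.comp f ∈ T} := by
    intro T
    constructor
    · intro h η
      obtain ⟨g, hg⟩ := h η
      obtain ⟨s, hs⟩ := surj g
      refine ⟨s, ?_⟩
      show (η.comp s).comp f ∈ T
      rw [Embedding.comp_assoc, ← hs]
      exact hg
    · intro h η
      obtain ⟨s, hs⟩ := h η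
      exact ⟨s.comp f, by rw [← Embedding.comp_assoc]; exact hs⟩
  have hset : ∀ η : K ↪[L] K,
      {s : ↥B ↪[L] K | s.comp f ∈ {g : ↥A ↪[L] K | η.comp g ∈ S}} =
      {s : ↥B ↪[L] K | η.comp s ∈ {t : ↥B ↪[L] K | t.comp f ∈ S}} := by
    intro η
    ext s
    simp only [Set.mem_setOf_eq, Embedding.comp_assoc]
  have keySU : EmbSomewhereUnavoidable S ↔
      EmbSomewhereUnavoidable {s : ↥B ↪[L] K | s.comp f ∈ S} := by
    constructor
    · rintro ⟨η, hη⟩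
      refine ⟨η, ?_⟩
      have := (key {g : ↥A ↪[L] K | η.comp g ∈ S}).1 hη
      rwa [hset η] at this
    · rintro ⟨η, hη⟩
      refine ⟨η, ?_⟩
      rw [key {g : ↥A ↪[L] K | η.comp g ∈ S}, hset η]
      exact hη
  refine ⟨?_, key S, keySU, not_congr keySU⟩
  constructor
  · rintro ⟨η, hη⟩
    exact ⟨η, fun s => by show (η.comp s).comp f ∈ S; rw [Embedding.comp_assoc]; exact hη _⟩
  · rintro ⟨η, hη⟩
    refine ⟨η, fun g => ?_⟩
    obtain ⟨s, hs⟩ := surj g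
    rw [hs, ← Embedding.comp_assoc]
    exact hη s
end

section
/- Let K be a Fraïssé structure and let A, B be finite substructures of K with Emb(A,B) ≠ ∅. If A and B have finite big Ramsey degrees R_A and R_B respectively, then R_A ≤ R_B. -/
open FirstOrder Language Set Function

/-- A coloring of `Emb(A,K)` is *unavoidable* if each of its fibers is empty or unavoidable. -/
def UnavoidableColoring {L : Language} {K : Type*} {A : Type*} [L.Structure K]
    [L.Structure A] {C : Type*} (γ : (A ↪[L] K) → C) : Prop :=
  ∀ c : C, γ ⁻¹' {c} = ∅ ∨ EmbUnavoidable (γ ⁻¹' {c})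

/-- `A` has big Ramsey degree `ℓ` (in `K`) if `ℓ` is least such that for every `r` and every
coloring `γ : Emb(A,K) → Fin r` there is a self-embedding `η` of `K` with
`|{γ(η∘f) : f ∈ Emb(A,K)}| ≤ ℓ`. -/
def HasBigRamseyDegree {L : Language} (A : Type*) [L.Structure A] (K : Type*)
    [L.Structure K] (ℓ : ℕ) : Prop :=
  IsLeast {l : ℕ | ∀ (r : ℕ) (γ : (A ↪[L] K) → Fin r),
    ∃ η : K ↪[L] K, (Set.range fun f : A ↪[L] K => γ (η.comp f)).ncard ≤ l} ℓ

private lemma embLift {L : Language} {K : Type*} [L.Structure K]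
    (hK : L.IsUltrahomogeneous K)
    (A B : L.Substructure K) (hA : (A : Set K).Finite)
    (e : ↥A ↪[L] ↥B) (f : ↥A ↪[L] K) :
    ∃ g : ↥B ↪[L] K, g.comp e = f := by
  have hAfg : A.FG := by
    rw [Substructure.fg_def]
    exact ⟨(A : Set K), hA, A.closure_eq⟩
  obtain ⟨α, hα⟩ := hK A hAfg f
  obtain ⟨β, hβ⟩ := hK A hAfg (B.subtype.comp e)
  refine ⟨(α.toEmbedding.comp β.symm.toEmbedding).comp B.subtype, ?_⟩
  ext a
  have h1 := DFunLike.congr_fun hα a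
  have h2 := DFunLike.congr_fun hβ a
  simp only [Embedding.comp_apply, Equiv.coe_toEmbedding] at h1 h2
  simp only [Embedding.comp_apply, Language.Equiv.coe_toEmbedding, h2,
    Language.Equiv.symm_apply_apply]
  exact h1.symm

/-- Let `K` be a Fraïssé structure and `A`, `B` finite substructures of `K` with
`Emb(A,B) ≠ ∅`.  If `A` and `B` have finite big Ramsey degrees `R_A` and `R_B`, then
`R_A ≤ R_B`. -/
theorem bigRamseyDegree_mono {L : Language} {K : Type*} [L.Structure K]
    [Countable K] [L.IsRelational] [Countable L.Symbols]
    (hK : L.IsUltrahomogeneous K)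
    (A B : L.Substructure K) (hA : (A : Set K).Finite) (hB : (B : Set K).Finite)
    (hemb : Nonempty (↥A ↪[L] ↥B)) (RA RB : ℕ)
    (hRA : HasBigRamseyDegree (L := L) ↥A K RA) (hRB : HasBigRamseyDegree (L := L) ↥B K RB) :
    RA ≤ RB := by
  refine hRA.2 ?_
  intro r γ
  obtain ⟨e⟩ := hemb
  obtain ⟨η, hη⟩ := hRB.1 r (fun g : ↥B ↪[L] K => γ (g.comp e))
  refine ⟨η, le_trans (Set.ncard_le_ncard ?_ (Set.toFinite _)) hη⟩
  rintro c ⟨f, rfl⟩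
  obtain ⟨g, rfl⟩ := embLift hK A B hA e f
  exact ⟨g, rfl⟩
end

section
/- Let K be a Fraïssé structure, A a finite substructure of K, and γ : Emb(A,K) → Fin r a coloring. Then there exists η ∈ Emb(K) such that the coloring γ·η (given by f ↦ γ(η∘f)) is unavoidable, i.e., each of its fibers is empty or unavoidable. -/
open FirstOrder Language Set Function

/-- Let `K` be a Fraïssé structure, `A` a finite substructure of `K`, and
`γ : Emb(A,K) → Fin r` a coloring.  Then there is `η ∈ Emb(K)` such that the coloring
`γ·η : f ↦ γ(η∘f)` is unavoidable. -/
theorem exists_unavoidable_restriction {L : Language} {K : Type*} [L.Structure K]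
    [Countable K] [L.IsRelational] [Countable L.Symbols]
    (hK : L.IsUltrahomogeneous K)
    (A : L.Substructure K) (hA : (A : Set K).Finite) (r : ℕ) (γ : (↥A ↪[L] K) → Fin r) :
    ∃ η : K ↪[L] K, UnavoidableColoring (fun f : ↥A ↪[L] K => γ (η.comp f)) := by
  suffices h : ∀ n : ℕ, ∀ η : K ↪[L] K,
      {c : Fin r | ∃ f : ↥A ↪[L] K, γ (η.comp f) = c}.ncard ≤ n →
      ∃ η' : K ↪[L] K, UnavoidableColoring (fun f : ↥A ↪[L] K => γ (η'.comp f)) by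
    refine h r (Embedding.refl L K) ?_
    calc {c : Fin r | ∃ f : ↥A ↪[L] K, γ ((Embedding.refl L K).comp f) = c}.ncard
        ≤ (Set.univ : Set (Fin r)).ncard :=
          Set.ncard_le_ncard (Set.subset_univ _) (Set.toFinite _)
      _ = r := by simp [Set.ncard_univ]
  intro n
  induction n with
  | zero =>
    intro η hη
    refine ⟨η, fun c => Or.inl ?_⟩
    have h0 : {c : Fin r | ∃ f : ↥A ↪[L] K, γ (η.comp f) = c} = ∅ := by
      have := Set.ncard_eq_zero (s := {c : Fin r | ∃ f : ↥A ↪[L] K, γ (η.comp f) = c})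
        (Set.toFinite _)
      exact this.mp (Nat.le_zero.mp hη)
    ext f
    simp only [Set.mem_preimage, Set.mem_singleton_iff, Set.mem_empty_iff_false, iff_false]
    intro hf
    have : c ∈ {c : Fin r | ∃ f : ↥A ↪[L] K, γ (η.comp f) = c} := ⟨f, hf⟩
    simp [h0] at this
  | succ n ih =>
    intro η hη
    by_cases hun : UnavoidableColoring (fun f : ↥A ↪[L] K => γ (η.comp f))
    · exact ⟨η, hun⟩
    · simp only [UnavoidableColoring, not_forall] at hun
      obtain ⟨c, hc⟩ := hun
      rw [not_or] at hc
      obtain ⟨hne, hnav⟩ := hc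
      simp only [EmbUnavoidable, not_forall] at hnav
      obtain ⟨η₀, hη₀⟩ := hnav
      push_neg at hη₀
      -- compose: the new nonempty-color set is a strict subset (c is removed)
      refine ih (η.comp η₀) ?_
      have hsub : {d : Fin r | ∃ f : ↥A ↪[L] K, γ ((η.comp η₀).comp f) = d} ⊆
          {d : Fin r | ∃ f : ↥A ↪[L] K, γ (η.comp f) = d} := by
        rintro d ⟨f, hf⟩
        exact ⟨η₀.comp f, by rwa [← Embedding.comp_assoc]⟩
      have hcnot : c ∉ {d : Fin r | ∃ f : ↥A ↪[L] K, γ ((η.comp η₀).comp f) = d} := by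
        rintro ⟨f, hf⟩
        have := hη₀ f
        rw [Embedding.comp_assoc] at hf
        exact this hf
      have hcin : c ∈ {d : Fin r | ∃ f : ↥A ↪[L] K, γ (η.comp f) = d} := by
        rcases Set.nonempty_iff_ne_empty.mpr hne with ⟨f, hf⟩
        exact ⟨f, hf⟩
      have hss : {d : Fin r | ∃ f : ↥A ↪[L] K, γ ((η.comp η₀).comp f) = d} ⊂
          {d : Fin r | ∃ f : ↥A ↪[L] K, γ (η.comp f) = d} :=
        ⟨hsub, fun h => hcnot (h hcin)⟩
      have := Set.ncard_lt_ncard hss (Set.toFinite _)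
      omega
end

section
/- Let K be a Fraïssé structure and A a finite substructure of K with finite big Ramsey degree R. Let γ be any coloring of Emb(A,K) and let δ be an unavoidable R-coloring of Emb(A,K). Then there exists η ∈ Emb(K) such that δ·η refines γ·η, i.e., for all f₀, f₁ ∈ Emb(A,K), δ(η∘f₀) = δ(η∘f₁) implies γ(η∘f₀) = γ(η∘f₁). -/
open FirstOrder Language Set Function

/-- Let `K` be a Fraïssé structure and `A` a finite substructure with finite big Ramsey degree
`R`.  Let `γ` be any coloring of `Emb(A,K)` (a function with finite range) and `δ` an
unavoidable `R`-coloring of `Emb(A,K)`.  Then there is `η ∈ Emb(K)` such that `δ·η` refines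
`γ·η`: for all `f₀, f₁ ∈ Emb(A,K)`, `δ(η∘f₀) = δ(η∘f₁)` implies `γ(η∘f₀) = γ(η∘f₁)`. -/
theorem exists_refining_restriction {L : Language} {K : Type*} [L.Structure K]
    [Countable K] [L.IsRelational] [Countable L.Symbols]
    (hK : L.IsUltrahomogeneous K)
    (A : L.Substructure K) (hA : (A : Set K).Finite)
    (R : ℕ) (hR : HasBigRamseyDegree (L := L) ↥A K R)
    {C D : Type*} (γ : (↥A ↪[L] K) → C) (hγfin : (Set.range γ).Finite)
    (δ : (↥A ↪[L] K) → D) (hδ : UnavoidableColoring δ) (hδR : (Set.range δ).ncard = R) :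
    ∃ η : K ↪[L] K, ∀ f₀ f₁ : ↥A ↪[L] K,
      δ (η.comp f₀) = δ (η.comp f₁) → γ (η.comp f₀) = γ (η.comp f₁) := by
    classical
  rcases Nat.eq_zero_or_pos R with hR0 | hRpos
  · obtain ⟨η, hη⟩ := hR.1 1 (fun _ => (0 : Fin 1))
    refine ⟨η, fun f₀ f₁ _ => ?_⟩
    exfalso
    have hfin : (Set.range fun f : ↥A ↪[L] K => (fun _ => (0 : Fin 1)) (η.comp f)).Finite :=
      Set.Finite.subset Set.finite_univ (Set.subset_univ _)
    rw [hR0, Nat.le_zero, Set.ncard_eq_zero hfin] at hη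
    exact Set.eq_empty_iff_forall_notMem.mp hη 0 ⟨f₀, rfl⟩
  · have hδfin : (Set.range δ).Finite :=
      Set.finite_of_ncard_ne_zero (by omega)
    have hSfin : (Set.range (fun f : ↥A ↪[L] K => (γ f, δ f))).Finite := by
      apply Set.Finite.subset (hγfin.prod hδfin)
      rintro _ ⟨f, rfl⟩
      exact ⟨⟨f, rfl⟩, ⟨f, rfl⟩⟩
    haveI : Fintype (Set.range (fun f : ↥A ↪[L] K => (γ f, δ f))) := hSfin.fintype
    set n := Fintype.card (Set.range (fun f : ↥A ↪[L] K => (γ f, δ f))) with hn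
    let e : (Set.range (fun f : ↥A ↪[L] K => (γ f, δ f))) ≃ Fin n := Fintype.equivFin _
    let c : (↥A ↪[L] K) → Fin n := fun f => e ⟨(γ f, δ f), ⟨f, rfl⟩⟩
    obtain ⟨η, hη⟩ := hR.1 n c
    refine ⟨η, fun f₀ f₁ hδeq => ?_⟩
    let p : Fin n → D := fun v => ((e.symm v : _) : C × D).2
    have hp : ∀ f, p (c (η.comp f)) = δ (η.comp f) := by
      intro f
      simp only [p, c, Equiv.symm_apply_apply]
    set T := Set.range (fun f : ↥A ↪[L] K => c (η.comp f)) with hT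
    have hTfin : T.Finite := Set.Finite.subset Set.finite_univ (Set.subset_univ _)
    have hUsub : Set.range δ ⊆ p '' T := by
      rintro _ ⟨f, rfl⟩
      rcases hδ (δ f) with h | h
      · exact absurd rfl (Set.eq_empty_iff_forall_notMem.mp h f)
      · obtain ⟨g, hg⟩ := h η
        refine ⟨c (η.comp g), ⟨g, rfl⟩, ?_⟩
        rw [hp]
        exact hg
    have h1 : R ≤ (p '' T).ncard := by
      rw [← hδR]
      exact Set.ncard_le_ncard hUsub (hTfin.image p)
    have h2 : (p '' T).ncard ≤ T.ncard := Set.ncard_image_le hTfin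
    have hcard : (p '' T).ncard = T.ncard := le_antisymm h2 (by omega)
    have hinj : Set.InjOn p T := Set.injOn_of_ncard_image_eq hcard hTfin
    have hceq : c (η.comp f₀) = c (η.comp f₁) := by
      apply hinj ⟨f₀, rfl⟩ ⟨f₁, rfl⟩
      rw [hp, hp, hδeq]
    have := congrArg (fun v => ((e.symm v : _) : C × D).1) hceq
    simpa only [c, Equiv.symm_apply_apply] using this
end

section
/- Let K be a Fraïssé structure, A ⊆ B finite substructures of K, and suppose B has finite big Ramsey degree R_B. Let γ be any coloring of Emb(A,K) and let δ be an unavoidable R_B-coloring of Emb(B,K). Then there exists η ∈ Emb(K) such that γ·η ≪ δ·η, i.e., for every f ∈ Emb(A,B) and all s₀, s₁ ∈ Emb(B,K), δ(η∘s₀) = δ(η∘s₁) implies γ(η∘s₀∘f) = γ(η∘s₁∘f). -/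
open FirstOrder Language Set Function

/-- Let `K` be a Fraïssé structure, `A ⊆ B` finite substructures, with `B` of finite big Ramsey
degree `R_B`.  Let `γ` be any coloring of `Emb(A,K)` (finite range) and `δ` an unavoidable
`R_B`-coloring of `Emb(B,K)`.  Then there is `η ∈ Emb(K)` with `γ·η ≪ δ·η`: for every
`f ∈ Emb(A,B)` and all `s₀, s₁ ∈ Emb(B,K)`, `δ(η∘s₀) = δ(η∘s₁)` implies
`γ(η∘s₀∘f) = γ(η∘s₁∘f)`. -/
theorem exists_strongly_refining_restriction {L : Language} {K : Type*} [L.Structure K]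
    [Countable K] [L.IsRelational] [Countable L.Symbols]
    (hK : L.IsUltrahomogeneous K)
    (A B : L.Substructure K) (hA : (A : Set K).Finite) (hB : (B : Set K).Finite)
    (hAB : A ≤ B)
    (RB : ℕ) (hRB : HasBigRamseyDegree (L := L) ↥B K RB)
    {C D : Type*} (γ : (↥A ↪[L] K) → C) (hγfin : (Set.range γ).Finite)
    (δ : (↥B ↪[L] K) → D) (hδ : UnavoidableColoring δ) (hδR : (Set.range δ).ncard = RB) :
    ∃ η : K ↪[L] K, ∀ (f : ↥A ↪[L] ↥B) (s₀ s₁ : ↥B ↪[L] K),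
      δ (η.comp s₀) = δ (η.comp s₁) →
      γ ((η.comp s₀).comp f) = γ ((η.comp s₁).comp f) := by
    classical
  have hAfin : Finite ↥A := hA.to_subtype
  have hBfin : Finite ↥B := hB.to_subtype
  have hABfin : Finite (↥A ↪[L] ↥B) :=
    Finite.of_injective (fun g => (g : ↥A → ↥B)) DFunLike.coe_injective
  -- `RB ≥ 1` since `Emb(B,K)` is nonempty
  have hRB1 : 1 ≤ RB := by
    obtain ⟨η₀, h₀⟩ := hRB.1 1 (fun _ => 0)
    refine le_trans ?_ h₀
    have h1 : (Set.range fun f : ↥B ↪[L] K => (0 : Fin 1)) = {0} :=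
      Set.eq_singleton_iff_unique_mem.2 ⟨⟨B.subtype, rfl⟩, fun x _ => Subsingleton.elim x 0⟩
    rw [h1, Set.ncard_singleton]
  -- the range of δ is finite
  have hδfin : (Set.range δ).Finite := by
    by_contra h
    rw [Set.Infinite.ncard h] at hδR
    omega
  -- the combined coloring ε
  set ε : (↥B ↪[L] K) → D × ((↥A ↪[L] ↥B) → C) :=
    fun s => (δ s, fun f => γ (s.comp f)) with hε
  have hεfin : (Set.range ε).Finite := by
    apply Set.Finite.subset (hδfin.prod (Set.Finite.pi fun _ : ↥A ↪[L] ↥B => hγfin))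
    rintro _ ⟨s, rfl⟩
    exact ⟨⟨s, rfl⟩, fun f _ => ⟨s.comp f, rfl⟩⟩
  have hεne : (Set.range ε).Nonempty := ⟨ε B.subtype, B.subtype, rfl⟩
  have hεsub : Finite ↥(Set.range ε) := hεfin.to_subtype
  obtain ⟨n, ⟨e⟩⟩ := Finite.exists_equiv_fin ↥(Set.range ε)
  have hn : Nonempty (Fin n) := Nonempty.map e hεne.to_subtype
  set F : D × ((↥A ↪[L] ↥B) → C) → Fin n :=
    fun x => if h : x ∈ Set.range ε then e ⟨x, h⟩ else Classical.arbitrary _ with hF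
  obtain ⟨η, hη⟩ := hRB.1 n (fun s => F (ε s))
  refine ⟨η, ?_⟩
  set S : Set (D × ((↥A ↪[L] ↥B) → C)) :=
    Set.range (fun s : ↥B ↪[L] K => ε (η.comp s)) with hS
  have hSsub : S ⊆ Set.range ε := by
    rintro _ ⟨s, rfl⟩; exact ⟨η.comp s, rfl⟩
  have hSfin : S.Finite := hεfin.subset hSsub
  have hFS : F '' S = Set.range (fun s : ↥B ↪[L] K => F (ε (η.comp s))) := by
    ext x
    constructor
    · rintro ⟨_, ⟨s, rfl⟩, rfl⟩; exact ⟨s, rfl⟩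
    · rintro ⟨s, rfl⟩; exact ⟨_, ⟨s, rfl⟩, rfl⟩
  have hFinj : Set.InjOn F S := by
    intro x hx y hy hxy
    have hx' := hSsub hx
    have hy' := hSsub hy
    rw [hF] at hxy
    simp only [dif_pos hx', dif_pos hy'] at hxy
    exact congrArg Subtype.val (e.injective hxy)
  have hScard : S.ncard ≤ RB := by
    rw [← Set.ncard_image_of_injOn hFinj, hFS]
    exact hη
  have hfstS : Prod.fst '' S = Set.range δ := by
    ext c
    constructor
    · rintro ⟨_, ⟨s, rfl⟩, rfl⟩; exact ⟨η.comp s, rfl⟩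
    · rintro ⟨s, rfl⟩
      rcases hδ (δ s) with h | h
      · exfalso
        have hm : s ∈ δ ⁻¹' {δ s} := rfl
        rw [h] at hm
        exact hm
      · obtain ⟨t, ht⟩ := h η
        exact ⟨ε (η.comp t), ⟨t, rfl⟩, ht⟩
  have hcard2 : (Prod.fst '' S).ncard = RB := by rw [hfstS, hδR]
  have heq : (Prod.fst '' S).ncard = S.ncard :=
    le_antisymm (Set.ncard_image_le hSfin) (by rw [hcard2]; exact hScard)
  have hinj : Set.InjOn Prod.fst S := Set.injOn_of_ncard_image_eq heq hSfin
  intro f s₀ s₁ hds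
  have h01 : ε (η.comp s₀) = ε (η.comp s₁) := hinj ⟨s₀, rfl⟩ ⟨s₁, rfl⟩ hds
  exact congrFun (congrArg Prod.snd h01) f
end

section
/- Let K be a Fraïssé structure and A a finite substructure of K with finite big Ramsey degree R. Let γ be an unavoidable R-coloring of Emb(A,K), let T be a nonempty fiber (color class) of γ, and suppose T = S₀ ∪ ⋯ ∪ S_{r-1} where the sets S₀, …, S_{r-1} are pairwise disjoint. Then there exist η ∈ Emb(K) and j < r such that η⁻¹(T) = η⁻¹(S_j). -/
open FirstOrder Language Set Function

/-!
Refine `γ` by also recording, for each embedding `f`, the set of indices `j` with `f ∈ S j`.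
Since `A` has big Ramsey degree `R`, on some copy `η ∘ Emb(A,K)` the refinement takes at most `R`
values, while the unavoidable `γ` still takes all of its `R` values there. So on that copy the
refinement is a function of `γ`, so `η⁻¹(T) ⊆ η⁻¹(S j)` as soon as `η⁻¹(S j)` is nonempty.
-/

section

variable {L : Language} {K A : Type*} [L.Structure K] [L.Structure A] {R : ℕ}

theorem HasBigRamseyDegree.exists_ncard_range_comp_le (hR : HasBigRamseyDegree (L := L) A K R)
    {D : Type*} [Finite D] (δ : (A ↪[L] K) → D) :
    ∃ η : K ↪[L] K, (range fun f : A ↪[L] K => δ (η.comp f)).ncard ≤ R := by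
  obtain ⟨n, ⟨e⟩⟩ := Finite.exists_equiv_fin D
  obtain ⟨η, hη⟩ := hR.1 n (e ∘ δ)
  refine ⟨η, ?_⟩
  rwa [show (range fun f => (e ∘ δ) (η.comp f)) = e '' range fun f => δ (η.comp f) from
    range_comp e _, ncard_image_of_injective _ e.injective] at hη

theorem HasBigRamseyDegree.pos [Nonempty (A ↪[L] K)] (hR : HasBigRamseyDegree (L := L) A K R) :
    0 < R := by
  obtain ⟨η, hη⟩ := hR.1 1 fun _ => 0
  rwa [range_const, ncard_singleton] at hη

theorem HasBigRamseyDegree.finite_range (hR : HasBigRamseyDegree (L := L) A K R) {C : Type*}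
    {γ : (A ↪[L] K) → C} (hγR : (range γ).ncard = R) : (range γ).Finite := by
  rcases isEmpty_or_nonempty (A ↪[L] K) with hA | hA
  · exact range_eq_empty γ ▸ finite_empty
  · exact finite_of_ncard_pos (hγR ▸ hR.pos)

theorem UnavoidableColoring.range_comp_eq {C : Type*} {γ : (A ↪[L] K) → C}
    (hγ : UnavoidableColoring γ) (η : K ↪[L] K) :
    (range fun f : A ↪[L] K => γ (η.comp f)) = range γ := by
  refine (range_comp_subset_range _ γ).antisymm ?_
  rintro _ ⟨f, rfl⟩
  obtain ⟨g, hg⟩ := (hγ (γ f)).resolve_left (Nonempty.ne_empty ⟨f, rfl⟩) η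
  exact ⟨g, hg⟩

theorem UnavoidableColoring.exists_eq_of_eq (hR : HasBigRamseyDegree (L := L) A K R) {C : Type*}
    {γ : (A ↪[L] K) → C} (hγ : UnavoidableColoring γ) (hγR : (range γ).ncard = R)
    {D : Type*} [Finite D] (κ : (A ↪[L] K) → D) :
    ∃ η : K ↪[L] K, ∀ f g : A ↪[L] K,
      γ (η.comp f) = γ (η.comp g) → κ (η.comp f) = κ (η.comp g) := by
  have : Finite (range γ) := (hR.finite_range hγR).to_subtype
  let δ : (A ↪[L] K) → range γ × D := fun f => (rangeFactorization γ f, κ f)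
  let p : range γ × D → C := fun d => d.1
  obtain ⟨η, hη⟩ := hR.exists_ncard_range_comp_le δ
  set X := range fun f => δ (η.comp f)
  have hpX : p '' X = range γ := (range_comp p _).symm.trans (hγ.range_comp_eq η)
  have hp : InjOn p X := by
    refine injOn_of_ncard_image_eq (le_antisymm ncard_image_le ?_)
    rwa [hpX, hγR]
  exact ⟨η, fun f g hfg => congrArg Prod.snd (hp ⟨f, rfl⟩ ⟨g, rfl⟩ hfg)⟩

end

theorem exists_concentrating_embedding_general {L : Language} {K : Type*} [L.Structure K]
    (A : L.Substructure K)
    (R : ℕ) (hR : HasBigRamseyDegree (L := L) ↥A K R)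
    {C : Type*} (γ : (↥A ↪[L] K) → C)
    (hγ : UnavoidableColoring γ) (hγR : (Set.range γ).ncard = R)
    (c : C) (hT : (γ ⁻¹' {c}).Nonempty)
    (r : ℕ) (S : Fin r → Set (↥A ↪[L] K))
    (hcup : γ ⁻¹' {c} = ⋃ j, S j) :
    ∃ (η : K ↪[L] K) (j : Fin r),
      {f : ↥A ↪[L] K | η.comp f ∈ γ ⁻¹' {c}} = {f : ↥A ↪[L] K | η.comp f ∈ S j} := by
  obtain ⟨η, hη⟩ := hγ.exists_eq_of_eq hR hγR fun f => {j | f ∈ S j}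
  obtain ⟨g, hg⟩ := (hγ c).resolve_left hT.ne_empty η
  obtain ⟨j, hj⟩ := mem_iUnion.mp (hcup ▸ hg)
  refine ⟨η, j, Set.ext fun f => ⟨fun hf => ?_, fun hf => hcup ▸ mem_iUnion_of_mem j hf⟩⟩
  have hfg : γ (η.comp f) = γ (η.comp g) := hf.trans hg.symm
  exact (Set.ext_iff.mp (hη f g hfg) j).mpr hj

/-- Let `K` be a Fraïssé structure and `A` a finite substructure with finite big Ramsey degree
`R`.  Let `γ` be an unavoidable `R`-coloring of `Emb(A,K)`, `T = γ⁻¹({c})` a nonempty color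
class, and suppose `T = S₀ ∪ ⋯ ∪ S_{r-1}` with the `S_j` pairwise disjoint.  Then there are
`η ∈ Emb(K)` and `j < r` with `η⁻¹(T) = η⁻¹(S_j)`. -/
theorem exists_concentrating_embedding {L : Language} {K : Type*} [L.Structure K]
    [Countable K] [L.IsRelational] [Countable L.Symbols]
    (hK : L.IsUltrahomogeneous K)
    (A : L.Substructure K) (hA : (A : Set K).Finite)
    (R : ℕ) (hR : HasBigRamseyDegree (L := L) ↥A K R)
    {C : Type*} (γ : (↥A ↪[L] K) → C)
    (hγ : UnavoidableColoring γ) (hγR : (Set.range γ).ncard = R)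
    (c : C) (hT : (γ ⁻¹' {c}).Nonempty)
    (r : ℕ) (S : Fin r → Set (↥A ↪[L] K))
    (hdisj : Pairwise (Function.onFun Disjoint S)) (hcup : γ ⁻¹' {c} = ⋃ j, S j) :
    ∃ (η : K ↪[L] K) (j : Fin r),
      {f : ↥A ↪[L] K | η.comp f ∈ γ ⁻¹' {c}} = {f : ↥A ↪[L] K | η.comp f ∈ S j} :=
  exists_concentrating_embedding_general A R hR γ hγ hγR c hT r S hcup
end

section
/- Let K = ⋃_n A_n be a Fraïssé structure with an exhaustion by finite substructures, where each A_n has finite big Ramsey degree R_n. Fix r < ω, and let γ₀, …, γ_{r-1} and δ₀, …, δ_{r-1} be colorings such that for each n < r, γ_n and δ_n are unavoidable R_n-colorings of Emb(A_n,K), and γ_m ≪ γ_n and δ_m ≪ δ_n whenever m ≤ n < r. Then there exist bijections σ_n : image(γ_n) → image(δ_n) for n < r such that for all m ≤ n < r, all f ∈ Emb(A_m,A_n), and all s, t ∈ Emb(A_n,K) with σ_n(γ_n(s)) = δ_n(t), one has σ_m(γ_m(s∘f)) = δ_m(t∘f). -/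
open FirstOrder Language Set Function

section Aux

variable {L : Language} {K : Type*} [L.Structure K]

/-- Big Ramsey degrees are positive when there is at least one embedding. -/
lemma brd_pos {A : Type*} [L.Structure A] (e0 : A ↪[L] K) {R : ℕ}
    (hR : HasBigRamseyDegree (L := L) A K R) : 1 ≤ R := by
  by_contra h
  have hR0 : R = 0 := by omega
  subst hR0
  obtain ⟨η, hη⟩ := hR.1 1 (fun _ => 0)
  haveI : Nonempty (A ↪[L] K) := ⟨e0⟩
  have hconst : (Set.range fun _ : A ↪[L] K => (0 : Fin 1)) = {0} := Set.range_const
  rw [hconst] at hη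
  simp at hη

/-- Core application of the big Ramsey degree: any coloring with finite range can be shrunk
to at most `R` colors by composing with a self-embedding. -/
lemma shrink {A : Type*} [L.Structure A] {R : ℕ}
    (hR : HasBigRamseyDegree (L := L) A K R) {C : Type*}
    (ε : (A ↪[L] K) → C) (hfin : (Set.range ε).Finite) :
    ∃ η : K ↪[L] K, (Set.range fun f : A ↪[L] K => ε (η.comp f)).Finite ∧
      (Set.range fun f : A ↪[L] K => ε (η.comp f)).ncard ≤ R := by
  haveI : Fintype ↥(Set.range ε) := hfin.fintype
  set k := Fintype.card ↥(Set.range ε) with hk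
  let e : ↥(Set.range ε) ≃ Fin k := Fintype.equivFin _
  obtain ⟨η, hη⟩ := hR.1 k (fun g => e ⟨ε g, Set.mem_range_self g⟩)
  refine ⟨η, ?_, ?_⟩
  · exact hfin.subset (by rintro _ ⟨f, rfl⟩; exact Set.mem_range_self _)
  · set h : (A ↪[L] K) → ↥(Set.range ε) := fun f => ⟨ε (η.comp f), Set.mem_range_self _⟩
      with hh
    have h1 : (Set.range fun f : A ↪[L] K => ε (η.comp f)) = Subtype.val '' Set.range h := by
      rw [← Set.range_comp]; rfl
    have h2 : (Set.range fun f : A ↪[L] K =>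
        (fun g => e ⟨ε g, Set.mem_range_self g⟩) (η.comp f)) = ⇑e '' Set.range h := by
      rw [← Set.range_comp]; rfl
    rw [h1, Set.ncard_image_of_injective _ Subtype.val_injective,
      ← Set.ncard_image_of_injective (Set.range h) e.injective, ← h2]
    exact hη

end Aux

/-- Let `K = ⋃_n A_n` be a Fraïssé structure with an exhaustion by finite substructures, each
`A_n` of finite big Ramsey degree `R_n`.  Fix `r`, and let `γ_n`, `δ_n` (for `n < r`) be
unavoidable `R_n`-colorings of `Emb(A_n,K)` with `γ_m ≪ γ_n` and `δ_m ≪ δ_n` whenever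
`m ≤ n < r`.  Then there are bijections `σ_n : image(γ_n) → image(δ_n)` such that for all
`m ≤ n < r`, `f ∈ Emb(A_m,A_n)`, and `s, t ∈ Emb(A_n,K)` with `σ_n(γ_n(s)) = δ_n(t)`, one has
`σ_m(γ_m(s∘f)) = δ_m(t∘f)`.  (The diagrams of the two systems of colorings are isomorphic.) -/
theorem diagrams_isomorphic {L : Language} {K : Type*} [L.Structure K]
    [Countable K] [L.IsRelational] [Countable L.Symbols]
    (hK : L.IsUltrahomogeneous K)
    (A : ℕ → L.Substructure K) (hmono : Monotone A)
    (hfin : ∀ n, ((A n : Set K)).Finite) (hcover : ∀ x : K, ∃ n, x ∈ A n)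
    (R : ℕ → ℕ) (hR : ∀ n, HasBigRamseyDegree (L := L) ↥(A n) K (R n))
    (r : ℕ) {Cγ Cδ : ℕ → Type*}
    (γ : ∀ n, (↥(A n) ↪[L] K) → Cγ n) (δ : ∀ n, (↥(A n) ↪[L] K) → Cδ n)
    (hγu : ∀ n, n < r → UnavoidableColoring (γ n) ∧ (Set.range (γ n)).ncard = R n)
    (hδu : ∀ n, n < r → UnavoidableColoring (δ n) ∧ (Set.range (δ n)).ncard = R n)
    (hγref : ∀ m n, m ≤ n → n < r → ∀ (f : ↥(A m) ↪[L] ↥(A n)) (s₀ s₁ : ↥(A n) ↪[L] K),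
      γ n s₀ = γ n s₁ → γ m (s₀.comp f) = γ m (s₁.comp f))
    (hδref : ∀ m n, m ≤ n → n < r → ∀ (f : ↥(A m) ↪[L] ↥(A n)) (s₀ s₁ : ↥(A n) ↪[L] K),
      δ n s₀ = δ n s₁ → δ m (s₀.comp f) = δ m (s₁.comp f)) :
    ∃ σ : ∀ n, Cγ n → Cδ n,
      (∀ n, n < r → Set.BijOn (σ n) (Set.range (γ n)) (Set.range (δ n))) ∧
      (∀ m n, m ≤ n → n < r → ∀ (f : ↥(A m) ↪[L] ↥(A n)) (s t : ↥(A n) ↪[L] K),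
        σ n (γ n s) = δ n t → σ m (γ m (s.comp f)) = δ m (t.comp f)) := by
    classical
  have e0 : ∀ n, ↥(A n) ↪[L] K := fun n => (A n).subtype
  -- the ranges of the colorings are finite
  have hγfin : ∀ n, n < r → (Set.range (γ n)).Finite := by
    intro n hn
    by_contra h
    have h2 := (hγu n hn).2
    have hpos := brd_pos (e0 n) (hR n)
    rw [Set.Infinite.ncard h] at h2
    omega
  have hδfin : ∀ n, n < r → (Set.range (δ n)).Finite := by
    intro n hn
    by_contra h
    have h2 := (hδu n hn).2
    have hpos := brd_pos (e0 n) (hR n)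
    rw [Set.Infinite.ncard h] at h2
    omega
  -- find a single self-embedding shrinking all the pair colorings at once
  have main : ∀ j : ℕ, ∃ η : K ↪[L] K, ∀ n, r - j ≤ n → n < r →
      (Set.range fun f : ↥(A n) ↪[L] K => (γ n (η.comp f), δ n (η.comp f))).Finite ∧
      (Set.range fun f : ↥(A n) ↪[L] K => (γ n (η.comp f), δ n (η.comp f))).ncard ≤ R n := by
    intro j
    induction j with
    | zero =>
      refine ⟨Embedding.refl L K, fun n h1 h2 => ?_⟩
      exfalso; omega
    | succ j ih =>
      obtain ⟨η, hη⟩ := ih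
      by_cases hcase : r - j ≤ r - (j + 1)
      · exact ⟨η, fun n h1 h2 => hη n (by omega) h2⟩
      · set n₀ := r - (j + 1) with hn₀def
        have hn₀r : n₀ < r := by omega
        have hεfin : (Set.range fun f : ↥(A n₀) ↪[L] K =>
            (γ n₀ (η.comp f), δ n₀ (η.comp f))).Finite := by
          apply Set.Finite.subset ((hγfin n₀ hn₀r).prod (hδfin n₀ hn₀r))
          rintro _ ⟨f, rfl⟩
          exact ⟨Set.mem_range_self _, Set.mem_range_self _⟩
        obtain ⟨η', h'fin, h'card⟩ := shrink (hR n₀)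
          (fun f : ↥(A n₀) ↪[L] K => (γ n₀ (η.comp f), δ n₀ (η.comp f))) hεfin
        refine ⟨η.comp η', fun n h1 h2 => ?_⟩
        rcases eq_or_lt_of_le h1 with heq | hlt
        · subst heq
          exact ⟨h'fin, h'card⟩
        · have hprev := hη n (by omega) h2
          have hsub : (Set.range fun f : ↥(A n) ↪[L] K =>
              (γ n ((η.comp η').comp f), δ n ((η.comp η').comp f))) ⊆
              Set.range fun f : ↥(A n) ↪[L] K => (γ n (η.comp f), δ n (η.comp f)) := by
            rintro _ ⟨f, rfl⟩
            exact ⟨η'.comp f, rfl⟩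
          exact ⟨hprev.1.subset hsub, le_trans (Set.ncard_le_ncard hsub hprev.1) hprev.2⟩
  obtain ⟨η, hηall⟩ := main r
  have hη : ∀ n, n < r →
      (Set.range fun f : ↥(A n) ↪[L] K => (γ n (η.comp f), δ n (η.comp f))).Finite ∧
      (Set.range fun f : ↥(A n) ↪[L] K => (γ n (η.comp f), δ n (η.comp f))).ncard ≤ R n :=
    fun n hn => hηall n (by omega) hn
  -- every color appears on the η-copy, by unavoidability
  have hitγ : ∀ n, n < r → ∀ c ∈ Set.range (γ n),
      ∃ f : ↥(A n) ↪[L] K, γ n (η.comp f) = c := by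
    intro n hn c hc
    rcases (hγu n hn).1 c with h0 | hun
    · exfalso
      obtain ⟨g, hg⟩ := hc
      have hmem : g ∈ γ n ⁻¹' {c} := by simp [hg]
      rw [h0] at hmem
      exact Set.notMem_empty g hmem
    · obtain ⟨f, hf⟩ := hun η
      exact ⟨f, hf⟩
  have hitδ : ∀ n, n < r → ∀ d ∈ Set.range (δ n),
      ∃ f : ↥(A n) ↪[L] K, δ n (η.comp f) = d := by
    intro n hn d hd
    rcases (hδu n hn).1 d with h0 | hun
    · exfalso
      obtain ⟨g, hg⟩ := hd
      have hmem : g ∈ δ n ⁻¹' {d} := by simp [hg]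
      rw [h0] at hmem
      exact Set.notMem_empty g hmem
    · obtain ⟨f, hf⟩ := hun η
      exact ⟨f, hf⟩
  -- projections of the pair set are the full ranges
  have hfst : ∀ n, n < r → Prod.fst ''
      (Set.range fun f : ↥(A n) ↪[L] K => (γ n (η.comp f), δ n (η.comp f))) =
      Set.range (γ n) := by
    intro n hn
    ext c
    constructor
    · rintro ⟨p, ⟨f, rfl⟩, rfl⟩
      exact ⟨η.comp f, rfl⟩
    · intro hc
      obtain ⟨f, hf⟩ := hitγ n hn c hc
      exact ⟨(γ n (η.comp f), δ n (η.comp f)), ⟨f, rfl⟩, hf⟩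
  have hsnd : ∀ n, n < r → Prod.snd ''
      (Set.range fun f : ↥(A n) ↪[L] K => (γ n (η.comp f), δ n (η.comp f))) =
      Set.range (δ n) := by
    intro n hn
    ext d
    constructor
    · rintro ⟨p, ⟨f, rfl⟩, rfl⟩
      exact ⟨η.comp f, rfl⟩
    · intro hd
      obtain ⟨f, hf⟩ := hitδ n hn d hd
      exact ⟨(γ n (η.comp f), δ n (η.comp f)), ⟨f, rfl⟩, hf⟩
  -- so the pair set has exactly R n elements and both projections are injective on it
  have hcard : ∀ n, n < r →
      (Set.range fun f : ↥(A n) ↪[L] K => (γ n (η.comp f), δ n (η.comp f))).ncard = R n := by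
    intro n hn
    have h1 := Set.ncard_image_le (f := Prod.fst) (hη n hn).1
    rw [hfst n hn, (hγu n hn).2] at h1
    exact le_antisymm (hη n hn).2 h1
  have hinjfst : ∀ n, n < r → Set.InjOn Prod.fst
      (Set.range fun f : ↥(A n) ↪[L] K => (γ n (η.comp f), δ n (η.comp f))) := by
    intro n hn
    apply Set.injOn_of_ncard_image_eq _ (hη n hn).1
    rw [hfst n hn, (hγu n hn).2, hcard n hn]
  have hinjsnd : ∀ n, n < r → Set.InjOn Prod.snd
      (Set.range fun f : ↥(A n) ↪[L] K => (γ n (η.comp f), δ n (η.comp f))) := by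
    intro n hn
    apply Set.injOn_of_ncard_image_eq _ (hη n hn).1
    rw [hsnd n hn, (hδu n hn).2, hcard n hn]
  -- well-definedness of σ
  have wd : ∀ n, n < r → ∀ f f' : ↥(A n) ↪[L] K,
      γ n (η.comp f) = γ n (η.comp f') → δ n (η.comp f) = δ n (η.comp f') := by
    intro n hn f f' hγeq
    have hp := hinjfst n hn (Set.mem_range_self f) (Set.mem_range_self f') hγeq
    exact congrArg Prod.snd hp
  let σ : ∀ n, Cγ n → Cδ n := fun n c =>
    if h : n < r ∧ ∃ f : ↥(A n) ↪[L] K, γ n (η.comp f) = c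
    then δ n (η.comp h.2.choose) else δ n ((A n).subtype)
  have hσ : ∀ n, n < r → ∀ f : ↥(A n) ↪[L] K,
      σ n (γ n (η.comp f)) = δ n (η.comp f) := by
    intro n hn f
    have h : n < r ∧ ∃ g : ↥(A n) ↪[L] K, γ n (η.comp g) = γ n (η.comp f) := ⟨hn, f, rfl⟩
    have hd : σ n (γ n (η.comp f)) = δ n (η.comp h.2.choose) := dif_pos h
    rw [hd]
    exact wd n hn h.2.choose f h.2.choose_spec
  refine ⟨σ, ?_, ?_⟩
  · intro n hn
    refine ⟨?_, ?_, ?_⟩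
    · intro c hc
      obtain ⟨f, hf⟩ := hitγ n hn c hc
      rw [← hf, hσ n hn f]
      exact Set.mem_range_self _
    · intro c₁ hc₁ c₂ hc₂ hσeq
      obtain ⟨f₁, hf₁⟩ := hitγ n hn c₁ hc₁
      obtain ⟨f₂, hf₂⟩ := hitγ n hn c₂ hc₂
      rw [← hf₁, ← hf₂] at hσeq ⊢
      rw [hσ n hn f₁, hσ n hn f₂] at hσeq
      have hp := hinjsnd n hn (Set.mem_range_self f₁) (Set.mem_range_self f₂) hσeq
      exact congrArg Prod.fst hp
    · intro d hd
      obtain ⟨f, hf⟩ := hitδ n hn d hd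
      exact ⟨γ n (η.comp f), Set.mem_range_self _, by rw [hσ n hn f, hf]⟩
  · intro m n hmn hn f s t hst
    have hmr : m < r := lt_of_le_of_lt hmn hn
    obtain ⟨u, hu⟩ := hitγ n hn (γ n s) (Set.mem_range_self s)
    have h1 : σ n (γ n s) = δ n (η.comp u) := by rw [← hu, hσ n hn u]
    have hδeq : δ n (η.comp u) = δ n t := h1.symm.trans hst
    have hγm : γ m ((η.comp u).comp f) = γ m (s.comp f) := hγref m n hmn hn f _ _ hu
    have hδm : δ m ((η.comp u).comp f) = δ m (t.comp f) := hδref m n hmn hn f _ _ hδeq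
    rw [← hγm, ← hδm]
    have hassoc : (η.comp u).comp f = η.comp (u.comp f) := rfl
    rw [hassoc]
    exact hσ m hmr (u.comp f)
end

section
/- Let K = ⋃_n A_n be a Fraïssé structure with an exhaustion by finite substructures. The following are equivalent: (i) for every m < ω there is n ≥ m such that for all f₀, f₁ ∈ Emb(A_m,K) there exist s ∈ Emb(A_n,K) and f ∈ Emb(A_m,A_n) with s∘ι_m = f₀ and s∘f = f₁, where ι_m ∈ Emb(A_m,A_n) is the inclusion embedding; (ii) for every m < ω, the equivalence relation on Emb(A_m,K) × Emb(A_m,K) given by (f₀,f₁) ∼ (h₀,h₁) iff there is g ∈ Aut(K) with g∘f₀ = h₀ and g∘f₁ = h₁ has only finitely many equivalence classes. -/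
/-!
Pairs of embeddings `A_m → K` modulo `Aut(K)` are, by ultrahomogeneity, the same as pairs
`(ι_m, h)` modulo the pointwise stabiliser of `A_m`. If (i) holds, every class is represented by
`(ι_m, f)` with `f ∈ Emb(A_m, A_n)`, a finite set. Conversely, finitely many classes have
finitely many representatives `(ι_m, r)`; their images lie in some `A_n`, and transporting a
pair onto its representative by an automorphism yields the factorisation through `A_n`.
-/

open FirstOrder Language Set Function

theorem Monotone.exists_ge_subset_of_finite {ι α : Type*} [Preorder ι] [IsDirectedOrder ι]
    {A : ι → Set α} (hmono : Monotone A) (hcover : ∀ x, ∃ i, x ∈ A i) {S : Set α}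
    (hS : S.Finite) (i : ι) : ∃ j, i ≤ j ∧ S ⊆ A j := by
  have : Nonempty ι := ⟨i⟩
  obtain ⟨j₀, hj₀⟩ := hmono.directed_le.exists_mem_subset_of_finset_subset_biUnion
    (s := hS.toFinset) fun x _ => mem_iUnion.2 (hcover x)
  obtain ⟨j, hij, hj₀j⟩ := directed_of (· ≤ ·) i j₀
  exact ⟨j, hij, hS.coe_toFinset ▸ hj₀.trans (hmono hj₀j)⟩

namespace FirstOrder.Language

variable {L : Language} {M N K : Type*} [L.Structure M] [L.Structure N] [L.Structure K]

variable (L M K) in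
def pairOrbitSetoid : Setoid ((M ↪[L] K) × (M ↪[L] K)) where
  r p q := ∃ g : K ≃[L] K, g.toEmbedding.comp p.1 = q.1 ∧ g.toEmbedding.comp p.2 = q.2
  iseqv :=
    { refl := fun _ => ⟨Equiv.refl L K, Embedding.refl_comp _, Embedding.refl_comp _⟩
      symm := fun ⟨g, h₁, h₂⟩ => ⟨g.symm,
        by rw [← h₁, ← Embedding.comp_assoc, Equiv.symm_comp_self_toEmbedding,
          Embedding.refl_comp],
        by rw [← h₂, ← Embedding.comp_assoc, Equiv.symm_comp_self_toEmbedding,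
          Embedding.refl_comp]⟩
      trans := fun ⟨g, h₁, h₂⟩ ⟨g', h₁', h₂'⟩ => ⟨g'.comp g,
        by rw [Equiv.comp_toEmbedding, Embedding.comp_assoc, h₁, h₁'],
        by rw [Equiv.comp_toEmbedding, Embedding.comp_assoc, h₂, h₂']⟩ }

variable (K) in
def Embedding.PairsFactorThrough (ι : M ↪[L] N) : Prop :=
  ∀ f₀ f₁ : M ↪[L] K, ∃ (s : N ↪[L] K) (f : M ↪[L] N), s.comp ι = f₀ ∧ s.comp f = f₁

theorem IsUltrahomogeneous.pairOrbitSetoid_comp (hK : L.IsUltrahomogeneous K)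
    {B : L.Substructure K} (hB : B.FG) (s : B ↪[L] K) (u v : M ↪[L] B) :
    pairOrbitSetoid L M K (B.subtype.comp u, B.subtype.comp v) (s.comp u, s.comp v) := by
  obtain ⟨g, rfl⟩ := hK B hB s
  exact ⟨g, (Embedding.comp_assoc _ _ _).symm, (Embedding.comp_assoc _ _ _).symm⟩

theorem IsUltrahomogeneous.finite_quotient_pairOrbitSetoid (hK : L.IsUltrahomogeneous K)
    [Finite M] {B : L.Substructure K} [Finite B] {ι : M ↪[L] B}
    (hι : ι.PairsFactorThrough K) : Finite (Quotient (pairOrbitSetoid L M K)) := by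
  have : Finite (M ↪[L] B) := Finite.of_injective _ DFunLike.coe_injective
  refine Finite.of_surjective (fun f : M ↪[L] B => ⟦(B.subtype.comp ι, B.subtype.comp f)⟧) ?_
  rintro ⟨f₀, f₁⟩
  obtain ⟨s, f, rfl, rfl⟩ := hι f₀ f₁
  exact ⟨f, Quotient.sound (hK.pairOrbitSetoid_comp Substructure.FG.of_finite s ι f)⟩

theorem exists_finite_pairOrbitSetoid_fst_eq [Finite M]
    [Finite (Quotient (pairOrbitSetoid L M K))] (e : M ↪[L] K) :
    ∃ S : Set K, S.Finite ∧
      ∀ h : M ↪[L] K, ∃ r : M ↪[L] K, range r ⊆ S ∧ pairOrbitSetoid L M K (e, r) (e, h) := by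
  have : Nonempty (M ↪[L] K) := ⟨e⟩
  let cls : (M ↪[L] K) → Quotient (pairOrbitSetoid L M K) := fun h => ⟦(e, h)⟧
  let rep : Quotient (pairOrbitSetoid L M K) → M ↪[L] K := invFun cls
  refine ⟨⋃ q, range (rep q), finite_iUnion fun _ => finite_range _, fun h => ?_⟩
  exact ⟨rep (cls h), subset_iUnion (fun q => range (rep q)) (cls h),
    Quotient.exact (invFun_eq (f := cls) ⟨h, rfl⟩)⟩

theorem IsUltrahomogeneous.pairsFactorThrough_inclusion (hK : L.IsUltrahomogeneous K)
    {A B : L.Substructure K} (hA : A.FG) (hAB : A ≤ B)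
    (hrep : ∀ h : A ↪[L] K, ∃ r : A ↪[L] K, range r ⊆ B ∧
      pairOrbitSetoid L A K (A.subtype, r) (A.subtype, h)) :
    (Substructure.inclusion hAB).PairsFactorThrough K := by
  intro f₀ f₁
  obtain ⟨g₀, rfl⟩ := hK A hA f₀
  obtain ⟨r, hrB, g, hgA, hgr⟩ := hrep (g₀.symm.toEmbedding.comp f₁)
  refine ⟨(g₀.toEmbedding.comp g.toEmbedding).comp B.subtype,
    Embedding.codRestrict B r fun x => hrB (mem_range_self x), ?_, ?_⟩
  · rw [Embedding.comp_assoc, Substructure.subtype_comp_inclusion, Embedding.comp_assoc, hgA]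
  · rw [Embedding.comp_assoc, Embedding.subtype_comp_codRestrict, Embedding.comp_assoc, hgr,
      ← Embedding.comp_assoc, Equiv.self_comp_symm_toEmbedding, Embedding.refl_comp]

end FirstOrder.Language

theorem roelcke_precompact_characterizations_general {L : Language} {K : Type*} [L.Structure K]
    (hK : L.IsUltrahomogeneous K)
    (A : ℕ → L.Substructure K) (hmono : Monotone A)
    (hfin : ∀ n, ((A n : Set K)).Finite) (hcover : ∀ x : K, ∃ n, x ∈ A n) :
    (∀ m : ℕ, ∃ n : ℕ, ∃ hmn : m ≤ n, ∀ f₀ f₁ : ↥(A m) ↪[L] K,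
      ∃ (s : ↥(A n) ↪[L] K) (f : ↥(A m) ↪[L] ↥(A n)),
        s.comp (Substructure.inclusion (hmono hmn)) = f₀ ∧ s.comp f = f₁) ↔
    (∀ m : ℕ, Finite (Quot (fun p q : (↥(A m) ↪[L] K) × (↥(A m) ↪[L] K) =>
      ∃ g : K ≃[L] K, g.toEmbedding.comp p.1 = q.1 ∧ g.toEmbedding.comp p.2 = q.2))) := by
  have hA : ∀ n, Finite (A n) := fun n => (hfin n).to_subtype
  refine ⟨fun hi m => ?_, fun hii m => ?_⟩
  · obtain ⟨n, hmn, hn⟩ := hi m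
    exact hK.finite_quotient_pairOrbitSetoid hn
  · have : Finite (Quotient (pairOrbitSetoid L (A m) K)) := hii m
    obtain ⟨S, hS, hrep⟩ := exists_finite_pairOrbitSetoid_fst_eq (A m).subtype
    obtain ⟨n, hmn, hSn⟩ := Monotone.exists_ge_subset_of_finite (A := fun n => (A n : Set K))
      (fun _ _ h => SetLike.coe_mono (hmono h)) hcover hS m
    exact ⟨n, hmn, hK.pairsFactorThrough_inclusion Substructure.FG.of_finite (hmono hmn)
      fun h => (hrep h).imp fun r hr => ⟨hr.1.trans hSn, hr.2⟩⟩

/-- Let `K = ⋃_n A_n` be a Fraïssé structure with an exhaustion by finite substructures.  The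
following are equivalent (both characterize Roelcke precompactness of `Aut(K)`):
(i) for every `m` there is `n ≥ m` such that any two `f₀, f₁ ∈ Emb(A_m,K)` factor as
`f₀ = s∘ι_m`, `f₁ = s∘f` for a single `s ∈ Emb(A_n,K)` and some `f ∈ Emb(A_m,A_n)`, where
`ι_m` is the inclusion of `A_m` into `A_n`;
(ii) for every `m`, the relation on pairs from `Emb(A_m,K)` identifying `(f₀,f₁)` and
`(h₀,h₁)` when some `g ∈ Aut(K)` satisfies `g∘f₀ = h₀` and `g∘f₁ = h₁` has only finitely many
classes. -/
theorem roelcke_precompact_characterizations {L : Language} {K : Type*} [L.Structure K]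
    [Countable K] [L.IsRelational] [Countable L.Symbols]
    (hK : L.IsUltrahomogeneous K)
    (A : ℕ → L.Substructure K) (hmono : Monotone A)
    (hfin : ∀ n, ((A n : Set K)).Finite) (hcover : ∀ x : K, ∃ n, x ∈ A n) :
    (∀ m : ℕ, ∃ n : ℕ, ∃ hmn : m ≤ n, ∀ f₀ f₁ : ↥(A m) ↪[L] K,
      ∃ (s : ↥(A n) ↪[L] K) (f : ↥(A m) ↪[L] ↥(A n)),
        s.comp (Substructure.inclusion (hmono hmn)) = f₀ ∧ s.comp f = f₁) ↔
    (∀ m : ℕ, Finite (Quot (fun p q : (↥(A m) ↪[L] K) × (↥(A m) ↪[L] K) =>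
      ∃ g : K ≃[L] K, g.toEmbedding.comp p.1 = q.1 ∧ g.toEmbedding.comp p.2 = q.2))) :=
  roelcke_precompact_characterizations_general hK A hmono hfin hcover
end

section
/- Suppose K' is a big Ramsey structure for the Fraïssé structure K. Then for all finite substructures A ⊆ B of K, every s ∈ Emb(B,K), every f₀ ∈ Emb(A,B), and every coloring c with two colors of the set {h ∈ Emb(A,K) : h ≈_A s∘f₀}, there exists t ∈ Emb(B,K) with t ≈_B s such that c is constant on the set {t∘f : f ∈ Emb(A,B) and s∘f ≈_A s∘f₀}. (In particular, the age of K' over K has the Ramsey Property.) -/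
open FirstOrder Language Set Function

/-- Given an `L'`-structure `S'` on `K`, two embeddings `h, h' ∈ Emb(A,K)` are equivalent
(`h ≈_A h'`) if they pull back the `L'`-relations on `K` the same way: for every relation
symbol `R` of `L'` and tuple `a` from `A`, `R(h(a))` holds iff `R(h'(a))` holds. -/
def StructEquiv {L : Language} {K : Type*} [L.Structure K]
    (L' : Language) (S' : L'.Structure K) {A : L.Substructure K}
    (h h' : ↥A ↪[L] K) : Prop :=
  ∀ (k : ℕ) (R : L'.Relations k) (a : Fin k → ↥A),
    (S'.RelMap R (fun i => h (a i)) ↔ S'.RelMap R (fun i => h' (a i)))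

/-- An `L'`-structure `S'` on `K` is a *big Ramsey structure* for `K` if every finite
substructure `A` of `K` has a finite big Ramsey degree `R_A`, the equivalence relation `≈_A`
has exactly `R_A` classes, and each `≈_A`-class is an unavoidable subset of `Emb(A,K)`. -/
def IsBigRamseyStructure {L : Language} {K : Type*} [L.Structure K]
    (L' : Language) (S' : L'.Structure K) : Prop :=
  ∀ A : L.Substructure K, (A : Set K).Finite →
    ∃ RA : ℕ, HasBigRamseyDegree (L := L) ↥A K RA ∧
      Finite (Quot (StructEquiv L' S' (A := A))) ∧
      Nat.card (Quot (StructEquiv L' S' (A := A))) = RA ∧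
      ∀ h : ↥A ↪[L] K, EmbUnavoidable {h' : ↥A ↪[L] K | StructEquiv L' S' h h'}

private lemma structEquiv_symm {L : Language} {K : Type*} [L.Structure K]
    {L' : Language} {S' : L'.Structure K} {A : L.Substructure K}
    {h h' : ↥A ↪[L] K} (H : StructEquiv L' S' h h') : StructEquiv L' S' h' h :=
  fun k R a => (H k R a).symm

private lemma structEquiv_trans {L : Language} {K : Type*} [L.Structure K]
    {L' : Language} {S' : L'.Structure K} {A : L.Substructure K}
    {h h' h'' : ↥A ↪[L] K} (H : StructEquiv L' S' h h')
    (H' : StructEquiv L' S' h' h'') : StructEquiv L' S' h h'' :=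
  fun k R a => (H k R a).trans (H' k R a)

private lemma structEquiv_comp {L : Language} {K : Type*} [L.Structure K]
    {L' : Language} {S' : L'.Structure K} {A B : L.Substructure K}
    {t s : ↥B ↪[L] K} (f : ↥A ↪[L] ↥B)
    (H : StructEquiv L' S' t s) : StructEquiv L' S' (t.comp f) (s.comp f) :=
  fun k R a => by simpa using H k R (fun i => f (a i))

/-- If `K'` (an expansion of the Fraïssé structure `K` to a language `L' ⊇ L`) is a big Ramsey
structure for `K`, then the age of `K'` over `K` has the Ramsey property: for all finite
substructures `A ⊆ B` of `K`, every `s ∈ Emb(B,K)`, every `f₀ ∈ Emb(A,B)`, and every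
2-coloring `c` of `{h ∈ Emb(A,K) : h ≈_A s∘f₀}`, there is `t ∈ Emb(B,K)` with `t ≈_B s` such
that `c` is constant on `{t∘f : f ∈ Emb(A,B), s∘f ≈_A s∘f₀}`. -/
theorem bigRamseyStructure_age_ramseyProperty {L : Language} {K : Type*} [iK : L.Structure K]
    [Countable K] [L.IsRelational] [Countable L.Symbols]
    (hK : L.IsUltrahomogeneous K)
    (L' : Language) (φ : L →ᴸ L') (S' : L'.Structure K)
    (hexp : @Language.LHom.IsExpansionOn L L' φ K iK S')
    (hBR : IsBigRamseyStructure (L := L) L' S')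
    (A B : L.Substructure K) (hA : (A : Set K).Finite) (hB : (B : Set K).Finite)
    (hAB : A ≤ B)
    (s : ↥B ↪[L] K) (f₀ : ↥A ↪[L] ↥B) (c : (↥A ↪[L] K) → Bool) :
    ∃ t : ↥B ↪[L] K, StructEquiv L' S' t s ∧
      ∀ f f' : ↥A ↪[L] ↥B,
        StructEquiv L' S' (s.comp f) (s.comp f₀) →
        StructEquiv L' S' (s.comp f') (s.comp f₀) →
        c (t.comp f) = c (t.comp f') := by
  classical
  obtain ⟨RA, hdeg, hQfin, hQcard, hunavA⟩ := hBR A hA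
  obtain ⟨RB, -, -, -, hunavB⟩ := hBR B hB
  set T : Set (↥A ↪[L] K) := {h | StructEquiv L' S' h (s.comp f₀)} with hTdef
  haveI : Finite (Quot (StructEquiv L' S' (A := A))) := hQfin
  set Q := Quot (StructEquiv L' S' (A := A)) with hQdef
  haveI : Fintype (Q × Bool) := Fintype.ofFinite _
  let e : (Q × Bool) ≃ Fin (Fintype.card (Q × Bool)) := Fintype.equivFin _
  set γ : (↥A ↪[L] K) → Q × Bool :=
    fun h => (Quot.mk _ h, if h ∈ T then c h else false) with hγdef
  obtain ⟨η, hη⟩ := hdeg.1 (Fintype.card (Q × Bool)) (fun h => e (γ h))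
  set Sr : Set (Q × Bool) := Set.range (fun f : ↥A ↪[L] K => γ (η.comp f)) with hSrdef
  have hSrcard : Sr.ncard ≤ RA := by
    have hre : (Set.range fun f : ↥A ↪[L] K => e (γ (η.comp f))) = e '' Sr := by
      rw [hSrdef, ← Set.range_comp]; rfl
    rw [← Set.ncard_image_of_injective Sr e.injective, ← hre]
    exact hη
  -- every class appears as a first coordinate in Sr
  have hsurj : ∀ q : Q, ∃ b : Bool, (q, b) ∈ Sr := by
    intro q
    induction q using Quot.ind with
    | _ h =>
      obtain ⟨f, hf⟩ := hunavA h η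
      refine ⟨(γ (η.comp f)).2, ?_⟩
      have hq : (γ (η.comp f)).1 = Quot.mk _ h := Quot.sound (structEquiv_symm hf)
      have : ((Quot.mk _ h : Q), (γ (η.comp f)).2) = γ (η.comp f) := by
        rw [← hq]
      rw [this]
      exact ⟨f, rfl⟩
  -- first-coordinate map is injective on Sr
  have hinj : ∀ (q : Q) (b b' : Bool), (q, b) ∈ Sr → (q, b') ∈ Sr → b = b' := by
    have hfin : Sr.Finite := Set.toFinite _
    have hF : Function.Surjective (fun p : Sr => (p : Q × Bool).1) := by
      intro q
      obtain ⟨b, hb⟩ := hsurj q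
      exact ⟨⟨(q, b), hb⟩, rfl⟩
    have hcard1 : Nat.card Q ≤ Nat.card Sr := Nat.card_le_card_of_surjective _ hF
    have hcard2 : Nat.card Sr = Sr.ncard := Nat.card_coe_set_eq Sr
    have hcardeq : Nat.card Sr = Nat.card Q := by
      rw [hQcard] at hcard1 ⊢
      omega
    have hbij : Function.Bijective (fun p : Sr => (p : Q × Bool).1) :=
      (Nat.bijective_iff_surjective_and_card _).2 ⟨hF, hcardeq⟩
    intro q b b' hb hb'
    have := hbij.1 (a₁ := ⟨(q, b), hb⟩) (a₂ := ⟨(q, b'), hb'⟩) rfl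
    exact congrArg (fun p : Sr => (p : Q × Bool).2) this
  -- key constancy fact
  have key : ∀ g g' : ↥A ↪[L] K, η.comp g ∈ T → η.comp g' ∈ T →
      c (η.comp g) = c (η.comp g') := by
    intro g g' hg hg'
    have hq : (Quot.mk _ (η.comp g) : Q) = Quot.mk _ (η.comp g') :=
      Quot.sound (structEquiv_trans hg (structEquiv_symm hg'))
    have m1 : ((Quot.mk _ (η.comp g) : Q), c (η.comp g)) ∈ Sr := by
      have h1 : γ (η.comp g) = (Quot.mk _ (η.comp g), c (η.comp g)) := by
        simp only [hγdef, if_pos hg]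
      exact h1 ▸ ⟨g, rfl⟩
    have m2 : ((Quot.mk _ (η.comp g') : Q), c (η.comp g')) ∈ Sr := by
      have h2 : γ (η.comp g') = (Quot.mk _ (η.comp g'), c (η.comp g')) := by
        simp only [hγdef, if_pos hg']
      exact h2 ▸ ⟨g', rfl⟩
    exact hinj _ _ _ (hq ▸ m1) m2
  -- find t equivalent to s
  obtain ⟨u, hu⟩ := hunavB s η
  have hu' : StructEquiv L' S' s (η.comp u) := hu
  refine ⟨η.comp u, structEquiv_symm hu', ?_⟩
  intro f f' hf hf'
  have hassoc : ∀ g : ↥A ↪[L] ↥B, (η.comp u).comp g = η.comp (u.comp g) := by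
    intro g; ext x; rfl
  have hmem : ∀ g : ↥A ↪[L] ↥B, StructEquiv L' S' (s.comp g) (s.comp f₀) →
      η.comp (u.comp g) ∈ T := by
    intro g hg
    have h1 : StructEquiv L' S' ((η.comp u).comp g) (s.comp g) :=
      structEquiv_comp g (structEquiv_symm hu')
    have h2 : StructEquiv L' S' ((η.comp u).comp g) (s.comp f₀) :=
      structEquiv_trans h1 hg
    rw [← hassoc g]
    exact h2
  have := key (u.comp f) (u.comp f') (hmem f hf) (hmem f' hf')
  rw [hassoc f, hassoc f']
  exact this
end

section
/- Let K = ⋃_n A_n be a Fraïssé structure in a relational language L with an exhaustion by finite substructures, and suppose each A_n has finite big Ramsey degree R_n. Assume that for each n < ω there is an unavoidable R_n-coloring γ_n of Emb(A_n,K) such that γ_m ≪ γ_n whenever m ≤ n < ω. Then K admits a big Ramsey structure: there exist a relational language L' containing L and an L'-structure K' with the same underlying set as K whose L-reduct is K, such that every finite substructure A of K has a finite big Ramsey degree R_A, the equivalence relation ≈_A on Emb(A,K) has exactly R_A equivalence classes, and every ≈_A-class is an unavoidable subset of Emb(A,K). -/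
open FirstOrder Language Set Function

/-!
For a tuple `x` of `K`, let `level x` be the least `n` such that `x` is the image of a tuple `u`
of `A n` under some `g : A n ↪ K`, and record each such `g` by the pair `(γ n g, u)`. Pairs are
linked when they realize a common tuple, and the expansion relates two tuples of the same level
whose realizing pairs lie in the same linked component. For finite `B ⊆ K` this leaves finitely
many classes of embeddings `B ↪ K`, and each class is unavoidable: below any `η`, a copy of a
large `A M` chosen in the color class of the inclusion carries, by coherence, the original colors
on all the `A n ⊆ A M`, hence shares realizing pairs with the given tuples. Conversely, given a
coloring `δ` of `Emb(B, K)`, refine `γ n` by the `δ`-colors of all copies of `B` in `A n`: since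
`γ n` already has the maximal number `R n` of unavoidable colors, below some `ζ` the refinement
is no finer than `γ n`, and then `δ (ζ ∘ -)` is constant along linked components. So the number
of classes is the big Ramsey degree of `B`.
-/

namespace FirstOrder.Language

variable {L : Language} {M N P : Type*} [L.Structure M] [L.Structure N] [L.Structure P]

def Embedding.ofCompEq (g : M ↪[L] N) (h : P ↪[L] N) (u : P → M) (hu : ∀ x, g (u x) = h x) :
    P ↪[L] M where
  toFun := u
  inj' x y hxy := h.injective (by rw [← hu, ← hu, hxy])
  map_fun' f x := g.injective (by
    rw [hu, h.map_fun, g.map_fun]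
    congr 1
    funext i
    exact (hu (x i)).symm)
  map_rel' r x := by
    rw [← g.map_rel, ← h.map_rel]
    exact iff_of_eq (congrArg _ (funext fun i => hu (x i)))

@[simp]
theorem Embedding.ofCompEq_apply (g : M ↪[L] N) (h : P ↪[L] N) (u : P → M)
    (hu : ∀ x, g (u x) = h x) (x : P) : g.ofCompEq h u hu x = u x :=
  rfl

theorem Embedding.comp_ofCompEq (g : M ↪[L] N) (h : P ↪[L] N) (u : P → M)
    (hu : ∀ x, g (u x) = h x) : g.comp (g.ofCompEq h u hu) = h :=
  Embedding.ext hu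

theorem IsUltrahomogeneous.exists_comp_eq {K : Type*} [L.Structure K]
    (hK : L.IsUltrahomogeneous K) [Finite M] (h h' : M ↪[L] K) :
    ∃ σ : K ↪[L] K, h' = σ.comp h :=
  haveI : Nonempty (K ↪[L] K) := ⟨Embedding.refl L K⟩
  hK.extend_embedding Structure.FG.of_finite h' h

end FirstOrder.Language

section Ramsey

variable {L : Language} {K X : Type*} [L.Structure K] [L.Structure X]

/-- `HasBigRamseyDegree X K ℓ` says that `ℓ` is the least such bound. -/
def IsBigRamseyBound (L : Language) (X K : Type*) [L.Structure X] [L.Structure K] (l : ℕ) :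
    Prop :=
  ∀ (r : ℕ) (δ : (X ↪[L] K) → Fin r),
    ∃ η : K ↪[L] K, (range fun f : X ↪[L] K => δ (η.comp f)).ncard ≤ l

theorem EmbUnavoidable.mono {S T : Set (X ↪[L] K)} (hS : EmbUnavoidable S) (hST : S ⊆ T) :
    EmbUnavoidable T :=
  fun η => (hS η).imp fun _ hf => hST hf

theorem UnavoidableColoring.exists_comp_eq {C : Type*} {γ : (X ↪[L] K) → C}
    (hγ : UnavoidableColoring γ) (ζ : K ↪[L] K) {c : C} (hc : c ∈ range γ) :
    ∃ g : X ↪[L] K, γ (ζ.comp g) = c := by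
  obtain ⟨g, rfl⟩ := hc
  exact (hγ (γ g)).resolve_left (Set.nonempty_iff_ne_empty.1 ⟨g, rfl⟩) ζ

theorem IsBigRamseyBound.le_of_unavoidable {l N : ℕ} (hl : IsBigRamseyBound L X K l)
    (c : (X ↪[L] K) → Fin N) (hc : ∀ i, EmbUnavoidable (c ⁻¹' {i})) : N ≤ l := by
  obtain ⟨η, hη⟩ := hl N c
  have : (range fun f : X ↪[L] K => c (η.comp f)) = univ :=
    Set.eq_univ_of_forall fun i => hc i η
  rwa [this, Set.ncard_univ, Nat.card_fin] at hη

theorem IsBigRamseyBound.finite_range {l : ℕ} (hl : IsBigRamseyBound L X K l) {C : Type*}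
    {γ : (X ↪[L] K) → C} (hγ : UnavoidableColoring γ) :
    (range γ).Finite ∧ (range γ).ncard ≤ l := by
  classical
  have hsub : ∀ T : Finset C, ↑T ⊆ range γ → T.card ≤ l := by
    intro T hT
    rcases T.eq_empty_or_nonempty with rfl | ⟨c₀, hc₀⟩
    · exact Nat.zero_le l
    let c : (X ↪[L] K) → Fin T.card := fun f =>
      T.equivFin (if h : γ f ∈ T then ⟨γ f, h⟩ else ⟨c₀, hc₀⟩)
    refine hl.le_of_unavoidable c fun i => ?_
    have hi := (T.equivFin.symm i).2
    refine ((hγ (T.equivFin.symm i : C)).resolve_left ?_).mono fun f (hf : γ f = _) => ?_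
    · obtain ⟨g, hg⟩ := hT hi
      exact Set.nonempty_iff_ne_empty.1 ⟨g, hg⟩
    · simp [c, hf, hi]
  by_cases hfin : (range γ).Finite
  · exact ⟨hfin, (Set.ncard_eq_toFinset_card _ hfin).trans_le (hsub _ (by simp))⟩
  · obtain ⟨T, hT, hcard⟩ := Set.Infinite.exists_subset_card_eq hfin (l + 1)
    exact absurd (hsub T hT) (by omega)

/-- Pass below a self-embedding avoiding some color until no color can be avoided; each step
loses a color. -/
theorem exists_unavoidableColoring_comp {C : Type*} (γ : (X ↪[L] K) → C)
    (hγ : (range γ).Finite) : ∃ ζ : K ↪[L] K, UnavoidableColoring fun f => γ (ζ.comp f) := by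
  induction h : (range γ).ncard using Nat.strong_induction_on generalizing γ with
  | _ n ih =>
  by_cases hall : UnavoidableColoring γ
  · exact ⟨Embedding.refl L K, hall⟩
  simp only [UnavoidableColoring, not_forall, not_or] at hall
  obtain ⟨c, hne, hc⟩ := hall
  simp only [EmbUnavoidable, not_forall, not_exists] at hc
  obtain ⟨η, hη⟩ := hc
  have hsub : range (fun f => γ (η.comp f)) ⊆ range γ \ {c} := by
    rintro _ ⟨f, rfl⟩
    exact ⟨⟨_, rfl⟩, hη f⟩
  have hlt : (range fun f => γ (η.comp f)).ncard < n := by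
    rw [← h]
    refine (Set.ncard_le_ncard hsub hγ.sdiff).trans_lt (Set.ncard_sdiff_singleton_lt_of_mem ?_ hγ)
    obtain ⟨f, hf⟩ := Set.nonempty_iff_ne_empty.2 hne
    exact ⟨f, hf⟩
  obtain ⟨ζ, hζ⟩ := ih _ hlt _ (hγ.subset (hsub.trans sdiff_subset)) rfl
  exact ⟨η.comp ζ, hζ⟩

/-- Below a self-embedding making the refinement `(γ, φ)` an unavoidable coloring, the
refinement has at most `|range γ|` values, all of them over distinct colors of `γ`. -/
theorem UnavoidableColoring.exists_factorsThrough {C D : Type*} [Finite D]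
    {γ : (X ↪[L] K) → C} (hγ : UnavoidableColoring γ)
    (hl : IsBigRamseyBound L X K (range γ).ncard) (φ : (X ↪[L] K) → D) :
    ∃ ζ : K ↪[L] K, ∀ g g', γ (ζ.comp g) = γ (ζ.comp g') → φ (ζ.comp g) = φ (ζ.comp g') := by
  let Λ : (X ↪[L] K) → C × D := fun g => (γ g, φ g)
  obtain ⟨ζ, hζ⟩ := exists_unavoidableColoring_comp Λ
    (((hl.finite_range hγ).1.prod finite_univ).subset
      (range_subset_iff.2 fun g => ⟨⟨g, rfl⟩, trivial⟩))
  set V := range fun g => Λ (ζ.comp g)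
  have hV := hl.finite_range hζ
  have hfst : Prod.fst '' V = range γ := by
    refine (Set.image_subset_iff.2 ?_).antisymm fun c hc => ?_
    · rintro _ ⟨g, rfl⟩
      exact ⟨_, rfl⟩
    · obtain ⟨g, hg⟩ := hγ.exists_comp_eq ζ hc
      exact ⟨_, ⟨g, rfl⟩, hg⟩
  have hinj : InjOn Prod.fst V :=
    Set.injOn_of_ncard_image_eq (le_antisymm (Set.ncard_image_le hV.1) (hfst ▸ hV.2)) hV.1
  exact ⟨ζ, fun g g' hgg => congrArg Prod.snd (hinj ⟨g, rfl⟩ ⟨g', rfl⟩ hgg)⟩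

theorem hasBigRamseyDegree_card_quot {r : (X ↪[L] K) → (X ↪[L] K) → Prop} [Finite (Quot r)]
    (hr : Equivalence r) (hunav : ∀ h, EmbUnavoidable {h' | r h h'})
    (hcanon : ∀ (n : ℕ) (δ : (X ↪[L] K) → Fin n), ∃ ζ : K ↪[L] K,
      ∀ h h', r (ζ.comp h) (ζ.comp h') → δ (ζ.comp h) = δ (ζ.comp h')) :
    HasBigRamseyDegree (L := L) X K (Nat.card (Quot r)) := by
  refine ⟨fun n δ => ?_, fun l hl => ?_⟩
  · obtain ⟨ζ, hζ⟩ := hcanon n δ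
    refine ⟨ζ, ?_⟩
    let q : (X ↪[L] K) → Quot r := fun f => Quot.mk r (ζ.comp f)
    have hfac : FactorsThrough (fun f => δ (ζ.comp f)) q :=
      fun f f' hff => hζ f f' (hr.eqvGen_iff.1 (Quot.eqvGen_exact hff))
    let G := extend q (fun f => δ (ζ.comp f)) fun x => δ (ζ.comp x.out)
    calc (range fun f => δ (ζ.comp f)).ncard
        = (range (G ∘ q)).ncard := by rw [hfac.extend_comp]
      _ ≤ (G '' univ).ncard := by
          rw [Set.image_univ]
          exact Set.ncard_le_ncard (Set.range_comp_subset_range _ _) (Set.toFinite _)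
      _ ≤ Nat.card (Quot r) := (Set.ncard_image_le finite_univ).trans_eq (Set.ncard_univ _)
  · let e := Finite.equivFin (Quot r)
    refine IsBigRamseyBound.le_of_unavoidable hl (fun f => e (Quot.mk r f)) fun i => ?_
    obtain ⟨h, hh⟩ := Quot.exists_rep (e.symm i)
    refine (hunav h).mono fun h' (hh' : r h h') => ?_
    simp [← Quot.sound hh', hh]

end Ramsey

universe u v

section Expansion

variable {L : FirstOrder.Language.{u, v}} {K : Type*} [iK : L.Structure K]

/-- One new relation symbol per tuple `y` (coded by a natural number, `K` being countable),
holding exactly at the tuples `E`-equivalent to `y`. -/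
theorem exists_expansion_structEquiv_eq [Countable K] [L.IsRelational]
    (E : ∀ k, (Fin k → K) → (Fin k → K) → Prop) (hE : ∀ k, Equivalence (E k)) :
    ∃ (L' : FirstOrder.Language.{u, v}) (φ : L →ᴸ L') (S' : L'.Structure K), L'.IsRelational ∧
      @LHom.IsExpansionOn L L' φ K iK S' ∧ ∀ B : L.Substructure K,
        StructEquiv L' S' (A := B) =
          fun (h h' : B ↪[L] K) => ∀ k (a : Fin k → B), E k (h ∘ a) (h' ∘ a) := by
  obtain ⟨enc, henc⟩ := countable_iff_exists_injective (Σ k, Fin k → K) |>.1 inferInstance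
  let L₁ : FirstOrder.Language.{u, v} := ⟨fun _ => PEmpty, fun _ => ULift ℕ⟩
  let S₁ : L₁.Structure K :=
    { funMap := fun f => PEmpty.elim f
      RelMap := fun {k} R x => ∃ y, enc ⟨k, y⟩ = R.down ∧ E k y x }
  have : L₁.IsRelational := fun _ => ⟨fun f => PEmpty.elim f⟩
  refine ⟨L.sum L₁, LHom.sumInl, Language.sumStructure L L₁ K, inferInstance, inferInstance,
    fun B => funext₂ fun h h' => propext ⟨fun hhh k a => ?_, fun hE' k R a => ?_⟩⟩
  · obtain ⟨y, hy, hyE⟩ := (hhh k (Sum.inr ⟨enc ⟨k, h ∘ a⟩⟩) a).1 ⟨_, rfl, (hE k).refl _⟩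
    obtain rfl : y = h ∘ a := eq_of_heq (Sigma.mk.inj_iff.1 (henc hy)).2
    exact hyE
  · rcases R with r | R
    · exact (h.map_rel r a).trans (h'.map_rel r a).symm
    · exact exists_congr fun y => and_congr_right fun _ =>
        ⟨fun hy => (hE k).trans hy (hE' k a), fun hy => (hE k).trans hy ((hE k).symm (hE' k a))⟩

end Expansion

namespace BigRamsey

variable {L : Language} {K : Type*} [L.Structure K] {A : ℕ → L.Substructure K}
  {C : ℕ → Type*} (γ : ∀ n, (A n ↪[L] K) → C n)

/-- `γ m ≪ γ n` whenever `m ≤ n`. -/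
def IsCoherent : Prop :=
  ∀ m n, m ≤ n → ∀ (f : A m ↪[L] A n) (s₀ s₁ : A n ↪[L] K),
    γ n s₀ = γ n s₁ → γ m (s₀.comp f) = γ m (s₁.comp f)

structure IsCoherentSeq : Prop where
  mono : Monotone A
  cover : ∀ x, ∃ n, x ∈ A n
  finite : ∀ n, (A n : Set K).Finite
  unavoidable : ∀ n, UnavoidableColoring (γ n)
  coherent : IsCoherent γ

def realizations (n : ℕ) {k : ℕ} (x : Fin k → K) : Set (C n × (Fin k → A n)) :=
  {p | ∃ g : A n ↪[L] K, γ n g = p.1 ∧ ⇑g ∘ p.2 = x}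

noncomputable def level {k : ℕ} (x : Fin k → K) : ℕ :=
  sInf {n | (realizations γ n x).Nonempty}

def Linked (n k : ℕ) (p q : C n × (Fin k → A n)) : Prop :=
  ∃ x : Fin k → K, p ∈ realizations γ n x ∧ q ∈ realizations γ n x

def component (n : ℕ) {k : ℕ} (x : Fin k → K) : Set (Quot (Linked γ n k)) :=
  Quot.mk _ '' realizations γ n x

def TupleEquiv {k : ℕ} (x y : Fin k → K) : Prop :=
  level γ x = level γ y ∧ component γ (level γ x) x = component γ (level γ x) y

def EmbEquiv {X : Type*} [L.Structure X] (h h' : X ↪[L] K) : Prop :=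
  ∀ k (a : Fin k → X), TupleEquiv γ (h ∘ a) (h' ∘ a)

variable {γ}

theorem tupleEquiv_equivalence (k : ℕ) : Equivalence (TupleEquiv γ (k := k)) where
  refl _ := ⟨rfl, rfl⟩
  symm := by
    rintro x y ⟨hl, hc⟩
    exact ⟨hl.symm, hl ▸ hc.symm⟩
  trans := by
    rintro x y z ⟨hl, hc⟩ ⟨hl', hc'⟩
    exact ⟨hl.trans hl', hc.trans (hl ▸ hc')⟩

theorem embEquiv_equivalence {X : Type*} [L.Structure X] :
    Equivalence (EmbEquiv γ (X := X)) where
  refl _ _ _ := (tupleEquiv_equivalence _).refl _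
  symm h k a := (tupleEquiv_equivalence k).symm (h k a)
  trans h h' k a := (tupleEquiv_equivalence k).trans (h k a) (h' k a)

theorem tupleEquiv_iff {k n : ℕ} {x y : Fin k → K} (hx : level γ x = n) (hy : level γ y = n) :
    TupleEquiv γ x y ↔ component γ n x = component γ n y := by
  subst hx
  simp [TupleEquiv, hy]

theorem component_eq_of_mem {n k : ℕ} {x y : Fin k → K} {p : C n × (Fin k → A n)}
    (hx : p ∈ realizations γ n x) (hy : p ∈ realizations γ n y) :
    component γ n x = component γ n y := by
  have key : ∀ {x y : Fin k → K}, p ∈ realizations γ n x → p ∈ realizations γ n y →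
      component γ n x ⊆ component γ n y := by
    rintro x y hx hy _ ⟨q, hq, rfl⟩
    exact ⟨p, hy, Quot.sound ⟨x, hx, hq⟩⟩
  exact (key hx hy).antisymm (key hy hx)

theorem exists_le_subset (hmono : Monotone A) (hcover : ∀ x, ∃ n, x ∈ A n) {s : Set K}
    (hs : s.Finite) (m : ℕ) : ∃ M, m ≤ M ∧ s ⊆ A M := by
  choose N hN using hcover
  obtain ⟨b, hb⟩ := (hs.image N).bddAbove
  exact ⟨max m b, le_max_left m b,
    fun x hx => hmono ((hb ⟨x, hx, rfl⟩).trans (le_max_right m b)) (hN x)⟩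

theorem realizations_nonempty_level (hmono : Monotone A) (hcover : ∀ x, ∃ n, x ∈ A n)
    {k : ℕ} (x : Fin k → K) : (realizations γ (level γ x) x).Nonempty := by
  obtain ⟨M, -, hM⟩ := exists_le_subset hmono hcover (finite_range x) 0
  exact Nat.sInf_mem (s := {n | (realizations γ n x).Nonempty})
    ⟨M, (γ M (A M).subtype, fun i => ⟨x i, hM ⟨i, rfl⟩⟩), _, rfl, rfl⟩

theorem realizations_nonempty_comp {n k : ℕ} {x : Fin k → K}
    (hx : (realizations γ n x).Nonempty) (σ : K ↪[L] K) :
    (realizations γ n (σ ∘ x)).Nonempty := by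
  obtain ⟨⟨c, u⟩, g, -, hg⟩ := hx
  exact ⟨(γ n (σ.comp g), u), σ.comp g, rfl, by rw [← hg]; rfl⟩

theorem level_comp_eq (hK : L.IsUltrahomogeneous K) {X : Type*} [L.Structure X] [Finite X]
    (h h' : X ↪[L] K) {k : ℕ} (a : Fin k → X) : level γ (h ∘ a) = level γ (h' ∘ a) := by
  have key : ∀ h h' : X ↪[L] K, ∀ n, (realizations γ n (h ∘ a)).Nonempty →
      (realizations γ n (h' ∘ a)).Nonempty := by
    intro h h' n hn
    obtain ⟨σ, rfl⟩ := hK.exists_comp_eq h h'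
    exact realizations_nonempty_comp hn σ
  exact congrArg sInf (Set.ext fun n => ⟨key h h' n, key h' h n⟩)

theorem mem_realizations_comp {n k k' : ℕ} {x : Fin k → K} {p : C n × (Fin k → A n)}
    (hp : p ∈ realizations γ n x) (σ : Fin k' → Fin k) :
    (p.1, p.2 ∘ σ) ∈ realizations γ n (x ∘ σ) :=
  let ⟨g, hc, hg⟩ := hp
  ⟨g, hc, by rw [← hg]; rfl⟩

theorem Linked.comp {n k k' : ℕ} {p q : C n × (Fin k → A n)} (hpq : Linked γ n k p q)
    (σ : Fin k' → Fin k) : Linked γ n k' (p.1, p.2 ∘ σ) (q.1, q.2 ∘ σ) :=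
  let ⟨x, hp, hq⟩ := hpq
  ⟨x ∘ σ, mem_realizations_comp hp σ, mem_realizations_comp hq σ⟩

theorem realizations_comp_surjective {n k k' : ℕ} {x : Fin k → K} {σ : Fin k' → Fin k}
    (hσ : Surjective σ) :
    realizations γ n (x ∘ σ) = (fun p => (p.1, p.2 ∘ σ)) '' realizations γ n x := by
  refine Set.Subset.antisymm ?_ (Set.image_subset_iff.2 fun p hp => mem_realizations_comp hp σ)
  rintro ⟨c, u⟩ ⟨g, hc, hg⟩
  have hgu : ∀ i, g (u i) = x (σ i) := congrFun hg
  refine ⟨(c, u ∘ surjInv hσ), ⟨g, hc, funext fun i => ?_⟩, Prod.ext rfl (funext fun i => ?_)⟩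
  · simp [hgu, surjInv_eq hσ]
  · exact g.injective (by simp [hgu, surjInv_eq hσ])

theorem level_comp_surjective {k k' : ℕ} (x : Fin k → K) {σ : Fin k' → Fin k}
    (hσ : Surjective σ) : level γ (x ∘ σ) = level γ x := by
  simp only [level, realizations_comp_surjective hσ, Set.image_nonempty]

theorem TupleEquiv.comp_surjective {k k' : ℕ} {x y : Fin k → K} (hxy : TupleEquiv γ x y)
    {σ : Fin k' → Fin k} (hσ : Surjective σ) : TupleEquiv γ (x ∘ σ) (y ∘ σ) := by
  obtain ⟨hl, hc⟩ := hxy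
  let φ := Quot.map (fun p : C (level γ x) × (Fin k → A (level γ x)) => (p.1, p.2 ∘ σ))
    fun p q (hpq : Linked γ (level γ x) k p q) => hpq.comp σ
  have hφ : ∀ z : Fin k → K, component γ _ (z ∘ σ) = φ '' component γ (level γ x) z := by
    intro z
    simp only [component, realizations_comp_surjective hσ, Set.image_image]
    rfl
  rw [tupleEquiv_iff (level_comp_surjective x hσ) (by rw [level_comp_surjective y hσ, hl]),
    hφ, hφ, hc]

noncomputable def enumTuple {X : Type*} [Finite X] (s : Set X) : Fin (Nat.card s) → X :=
  fun i => (Finite.equivFin s).symm i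

theorem exists_surjective_eq_enumTuple_comp {X : Type*} [Finite X] {k : ℕ} (a : Fin k → X) :
    ∃ σ : Fin k → Fin (Nat.card (range a)), Surjective σ ∧ a = enumTuple (range a) ∘ σ :=
  ⟨Finite.equivFin _ ∘ rangeFactorization a,
    (Finite.equivFin _).surjective.comp rangeFactorization_surjective,
    funext fun i => by simp only [comp_apply, enumTuple, Equiv.symm_apply_apply]; rfl⟩

theorem embEquiv_iff_forall_set {X : Type*} [L.Structure X] [Finite X] {h h' : X ↪[L] K} :
    EmbEquiv γ h h' ↔ ∀ s : Set X, TupleEquiv γ (h ∘ enumTuple s) (h' ∘ enumTuple s) := by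
  refine ⟨fun hh s => hh _ _, fun hh k a => ?_⟩
  obtain ⟨σ, hσ, ha⟩ := exists_surjective_eq_enumTuple_comp a
  rw [ha]
  exact (hh _).comp_surjective hσ

theorem finite_quot_embEquiv (hK : L.IsUltrahomogeneous K) (hfin : ∀ n, (A n : Set K).Finite)
    (hrange : ∀ n, (range (γ n)).Finite) {X : Type*} [L.Structure X] [Finite X] :
    Finite (Quot (EmbEquiv γ (X := X))) := by
  rcases isEmpty_or_nonempty (X ↪[L] K) with hX | ⟨⟨h₀⟩⟩
  · infer_instance
  let n : Set X → ℕ := fun s => level γ (h₀ ∘ enumTuple s)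
  let F : (X ↪[L] K) → ∀ s, Set (Quot (Linked γ (n s) _)) :=
    fun h s => component γ (n s) (h ∘ enumTuple s)
  have hF : ∀ h h', EmbEquiv γ h h' ↔ F h = F h' := fun h h' => by
    rw [embEquiv_iff_forall_set, funext_iff]
    exact forall_congr' fun s => tupleEquiv_iff (level_comp_eq hK _ _ _) (level_comp_eq hK _ _ _)
  have hFfin : (range F).Finite := by
    refine (Set.Finite.pi' fun s => (((hrange (n s)).prod
      (haveI := (hfin (n s)).to_subtype; finite_univ (α := Fin _ → A (n s)))).image
        (Quot.mk _)).finite_subsets).subset ?_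
    rintro _ ⟨h, rfl⟩ s _ ⟨p, ⟨g, hg, -⟩, rfl⟩
    exact ⟨p, ⟨⟨g, hg⟩, trivial⟩, rfl⟩
  have : Finite (range (Quot.lift F fun h h' => (hF h h').1)) := by
    rw [Set.range_quot_lift]
    exact hFfin.to_subtype
  refine Finite.of_injective_finite_range (f := Quot.lift F fun h h' => (hF h h').1) ?_
  rintro ⟨h⟩ ⟨h'⟩ hhh
  exact Quot.sound ((hF h h').2 hhh)

theorem exists_comp_color_eq (hu : ∀ n, UnavoidableColoring (γ n)) (hcoh : IsCoherent γ)
    (η : K ↪[L] K) (M : ℕ) :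
    ∃ S : A M ↪[L] K, ∀ n ≤ M, ∀ f : A n ↪[L] A M,
      γ n ((η.comp S).comp f) = γ n ((A M).subtype.comp f) := by
  obtain ⟨S, hS⟩ := (hu M).exists_comp_eq η ⟨(A M).subtype, rfl⟩
  exact ⟨S, fun n hn f => hcoh n M hn f _ _ hS⟩

theorem embEquiv_unavoidable (hK : L.IsUltrahomogeneous K) (hγ : IsCoherentSeq γ)
    {X : Type*} [L.Structure X] [Finite X] (h₀ : X ↪[L] K) :
    EmbUnavoidable {h | EmbEquiv γ h₀ h} := by
  intro η
  let n : Set X → ℕ := fun s => level γ (h₀ ∘ enumTuple s)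
  have hreal : ∀ s, ∃ p, p ∈ realizations γ (n s) (h₀ ∘ enumTuple s) :=
    fun s => realizations_nonempty_level hγ.mono hγ.cover _
  choose p g hpg hg using hreal
  obtain ⟨b, hb⟩ := (finite_range n).bddAbove
  obtain ⟨M, hbM, hM⟩ := exists_le_subset hγ.mono hγ.cover
    ((finite_range h₀).union (finite_iUnion fun s =>
      haveI := (hγ.finite (n s)).to_subtype; finite_range (g s))) b
  obtain ⟨S, hS⟩ := exists_comp_color_eq hγ.unavoidable hγ.coherent η M
  have hh₀ : ∀ x, h₀ x ∈ A M := fun x => hM (Or.inl ⟨x, rfl⟩)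
  have hgM : ∀ s y, g s y ∈ A M := fun s y => hM (Or.inr (Set.mem_iUnion.2 ⟨s, y, rfl⟩))
  refine ⟨S.comp (h₀.codRestrict (A M) hh₀), embEquiv_iff_forall_set.2 fun s => ?_⟩
  rw [tupleEquiv_iff rfl (level_comp_eq hK _ _ _)]
  refine component_eq_of_mem ⟨g s, hpg s, hg s⟩
    ⟨(η.comp S).comp ((g s).codRestrict (A M) (hgM s)), ?_, funext fun i => ?_⟩
  · rw [hS _ ((hb ⟨s, rfl⟩).trans hbM), Embedding.subtype_comp_codRestrict, hpg]
  · exact congrArg (η.comp S) (Subtype.ext (congrFun (hg s) i))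

section PairValues

variable {X D : Type*} [L.Structure X] {N : ℕ} (γ) (ζ : K ↪[L] K) (δ : (X ↪[L] K) → D)
  (ea : Fin N ≃ X) (n : ℕ)

def ColorDetermines : Prop :=
  ∀ g g', γ n (ζ.comp g) = γ n (ζ.comp g') →
    ∀ e : X ↪[L] A n, δ (ζ.comp (g.comp e)) = δ (ζ.comp (g'.comp e))

/-- The value of `δ` below `ζ` transferred to a pair `(c, u)` whose `u` enumerates a copy of `X`;
by `eq_of_mem_pairValues` there is at most one. -/
def pairValues (p : C n × (Fin N → A n)) : Set D :=
  {v | ∃ (g : A n ↪[L] K) (e : X ↪[L] A n),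
    γ n (ζ.comp g) = p.1 ∧ ⇑e ∘ ea = p.2 ∧ δ (ζ.comp (g.comp e)) = v}

variable {γ ζ δ ea n}

theorem pairValues_nonempty (hu : UnavoidableColoring (γ n)) {h : X ↪[L] K}
    {p : C n × (Fin N → A n)} (hp : p ∈ realizations γ n (h ∘ ea)) :
    (pairValues γ ζ δ ea n p).Nonempty := by
  obtain ⟨g, hc, hg⟩ := hp
  obtain ⟨g₁, hg₁⟩ := hu.exists_comp_eq ζ ⟨g, hc⟩
  have hge : ∀ x, g (p.2 (ea.symm x)) = h x := fun x => by
    simpa using congrFun hg (ea.symm x)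
  exact ⟨_, g₁, g.ofCompEq h _ hge, hg₁, funext fun i => by simp, rfl⟩

/-- The witnesses of two linked pairs are moved, by the copy of `A M` from
`exists_comp_color_eq`, onto a single embedding of `X` with the right colors. -/
theorem eq_of_mem_pairValues (hγ : IsCoherentSeq γ) (hD : ColorDetermines γ ζ δ n)
    {p q : C n × (Fin N → A n)} (hpq : Linked γ n N p q) {v w : D}
    (hv : v ∈ pairValues γ ζ δ ea n p) (hw : w ∈ pairValues γ ζ δ ea n q) : v = w := by
  obtain ⟨t, ⟨gp, hcp, hgp⟩, ⟨gq, hcq, hgq⟩⟩ := hpq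
  obtain ⟨g₁, e₁, hc₁, he₁, rfl⟩ := hv
  obtain ⟨g₂, e₂, hc₂, he₂, rfl⟩ := hw
  have := (hγ.finite n).to_subtype
  obtain ⟨M, hnM, hM⟩ := exists_le_subset hγ.mono hγ.cover
    ((finite_range gp).union (finite_range gq)) n
  obtain ⟨S, hS⟩ := exists_comp_color_eq hγ.unavoidable hγ.coherent ζ M
  have hgpM : ∀ y, gp y ∈ A M := fun y => hM (Or.inl ⟨y, rfl⟩)
  have hgqM : ∀ y, gq y ∈ A M := fun y => hM (Or.inr ⟨y, rfl⟩)
  have hcolor : ∀ (g : A n ↪[L] K) (hg : ∀ y, g y ∈ A M),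
      γ n (ζ.comp (S.comp (g.codRestrict (A M) hg))) = γ n g := fun g hg =>
    (hS n hnM _).trans (congrArg (γ n) (Embedding.subtype_comp_codRestrict g (A M) hg))
  have hsame : S.comp ((gp.codRestrict (A M) hgpM).comp e₁) =
      S.comp ((gq.codRestrict (A M) hgqM).comp e₂) := by
    ext x
    have h₁ := congrFun hgp (ea.symm x)
    have h₂ := congrFun hgq (ea.symm x)
    rw [← he₁] at h₁
    rw [← he₂] at h₂
    have h : gp (e₁ x) = gq (e₂ x) := by simpa using h₁.trans h₂.symm
    exact congrArg S (Subtype.ext h)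
  calc δ (ζ.comp (g₁.comp e₁))
      = δ (ζ.comp ((S.comp (gp.codRestrict (A M) hgpM)).comp e₁)) :=
        hD _ _ (by rw [hc₁, hcolor, hcp]) e₁
    _ = δ (ζ.comp ((S.comp (gq.codRestrict (A M) hgqM)).comp e₂)) :=
        congrArg (fun f => δ (ζ.comp f)) hsame
    _ = δ (ζ.comp (g₂.comp e₂)) := hD _ _ (by rw [hc₂, hcolor, hcq]) e₂

theorem pairValues_eq_of_linked (hγ : IsCoherentSeq γ) (hD : ColorDetermines γ ζ δ n)
    {p q : C n × (Fin N → A n)} (hpq : Linked γ n N p q) :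
    pairValues γ ζ δ ea n p = pairValues γ ζ δ ea n q := by
  have key : ∀ {p q}, Linked γ n N p q → pairValues γ ζ δ ea n p ⊆ pairValues γ ζ δ ea n q := by
    intro p q hpq v hv
    obtain ⟨t, ⟨gp, -, hgp⟩, hq⟩ := id hpq
    obtain ⟨g₁, e₁, -, he₁, -⟩ := id hv
    have ht : ⇑(gp.comp e₁) ∘ ea = t := by rw [← hgp, ← he₁]; rfl
    obtain ⟨w, hw⟩ := pairValues_nonempty (ζ := ζ) (δ := δ) (hγ.unavoidable n) (ht ▸ hq)
    rwa [eq_of_mem_pairValues hγ hD hpq hv hw]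
  obtain ⟨t, hp, hq⟩ := hpq
  exact (key ⟨t, hp, hq⟩).antisymm (key ⟨t, hq, hp⟩)

theorem pairValues_eq_singleton (hγ : IsCoherentSeq γ) (hD : ColorDetermines γ ζ δ n)
    {h : X ↪[L] K} (hh : (realizations γ n (h ∘ ea)).Nonempty) {p : C n × (Fin N → A n)}
    (hp : p ∈ realizations γ n (ζ.comp h ∘ ea)) :
    pairValues γ ζ δ ea n p = {δ (ζ.comp h)} := by
  obtain ⟨⟨c₀, u₀⟩, g₀, -, hg₀⟩ := hh
  have hge : ∀ x, g₀ (u₀ (ea.symm x)) = h x := fun x => by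
    simpa using congrFun hg₀ (ea.symm x)
  have hp₀ : (γ n (ζ.comp g₀), u₀) ∈ realizations γ n (ζ.comp h ∘ ea) :=
    ⟨ζ.comp g₀, rfl, funext fun i => congrArg ζ (congrFun hg₀ i)⟩
  have hmem : δ (ζ.comp h) ∈ pairValues γ ζ δ ea n (γ n (ζ.comp g₀), u₀) :=
    ⟨g₀, g₀.ofCompEq h _ hge, rfl, funext fun i => by simp, by rw [Embedding.comp_ofCompEq]⟩
  rw [pairValues_eq_of_linked hγ hD ⟨_, hp, hp₀⟩]
  exact Set.eq_singleton_iff_unique_mem.2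
    ⟨hmem, fun v hv => eq_of_mem_pairValues hγ hD ⟨_, hp₀, hp₀⟩ hv hmem⟩

end PairValues

theorem exists_factorsThrough_embEquiv (hK : L.IsUltrahomogeneous K) (hγ : IsCoherentSeq γ)
    (hbound : ∀ n, IsBigRamseyBound L (A n) K (range (γ n)).ncard)
    {X D : Type*} [L.Structure X] [Finite X] [Finite D] (δ : (X ↪[L] K) → D) :
    ∃ ζ : K ↪[L] K, ∀ h h', EmbEquiv γ (ζ.comp h) (ζ.comp h') → δ (ζ.comp h) = δ (ζ.comp h') := by
  rcases isEmpty_or_nonempty (X ↪[L] K) with hX | ⟨⟨h₀⟩⟩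
  · exact ⟨Embedding.refl L K, fun h => isEmptyElim h⟩
  let ea := (Finite.equivFin X).symm
  let n := level γ (h₀ ∘ ea)
  have := (hγ.finite n).to_subtype
  have : Finite (X ↪[L] A n) := Finite.of_injective _ DFunLike.coe_injective
  obtain ⟨ζ, hζ⟩ := (hγ.unavoidable n).exists_factorsThrough (hbound n)
    fun g (e : X ↪[L] A n) => δ (g.comp e)
  have hD : ColorDetermines γ ζ δ n := fun g g' hgg => congrFun (hζ g g' hgg)
  have hlev : ∀ h : X ↪[L] K, level γ (h ∘ ea) = n := fun h => level_comp_eq hK h h₀ ea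
  have hreal : ∀ h : X ↪[L] K, (realizations γ n (h ∘ ea)).Nonempty := fun h =>
    hlev h ▸ realizations_nonempty_level hγ.mono hγ.cover _
  refine ⟨ζ, fun h h' hhh => ?_⟩
  have hcomp := (tupleEquiv_iff (hlev _) (hlev _)).1 (hhh _ ea)
  obtain ⟨p, hp⟩ := hreal (ζ.comp h)
  obtain ⟨q, hq, hqp⟩ : Quot.mk _ p ∈ component γ n (ζ.comp h' ∘ ea) := hcomp ▸ ⟨p, hp, rfl⟩
  have hval : pairValues γ ζ δ ea n q = pairValues γ ζ δ ea n p :=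
    congrArg (Quot.lift (pairValues γ ζ δ ea n) fun _ _ => pairValues_eq_of_linked hγ hD) hqp
  rw [pairValues_eq_singleton hγ hD (hreal h) hp,
    pairValues_eq_singleton hγ hD (hreal h') hq] at hval
  exact (Set.singleton_eq_singleton_iff.1 hval).symm

end BigRamsey

open BigRamsey

theorem exists_bigRamseyStructure_general {L : FirstOrder.Language.{u, v}} {K : Type*}
    [iK : L.Structure K] [Countable K] [L.IsRelational]
    (hK : L.IsUltrahomogeneous K)
    (A : ℕ → L.Substructure K) (hmono : Monotone A)
    (hfin : ∀ n, ((A n : Set K)).Finite) (hcover : ∀ x : K, ∃ n, x ∈ A n)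
    (R : ℕ → ℕ) (hR : ∀ n, HasBigRamseyDegree (L := L) ↥(A n) K (R n))
    {C : ℕ → Type*} (γ : ∀ n, (↥(A n) ↪[L] K) → C n)
    (hu : ∀ n, UnavoidableColoring (γ n) ∧ (Set.range (γ n)).ncard = R n)
    (href : ∀ m n, m ≤ n → ∀ (f : ↥(A m) ↪[L] ↥(A n)) (s₀ s₁ : ↥(A n) ↪[L] K),
      γ n s₀ = γ n s₁ → γ m (s₀.comp f) = γ m (s₁.comp f)) :
    ∃ (L' : FirstOrder.Language.{u, v}) (φ : L →ᴸ L') (S' : L'.Structure K),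
      L'.IsRelational ∧
      @Language.LHom.IsExpansionOn L L' φ K iK S' ∧
      IsBigRamseyStructure (L := L) L' S' := by
  have hγ : IsCoherentSeq γ := ⟨hmono, hcover, hfin, fun n => (hu n).1, href⟩
  have hbound : ∀ n, IsBigRamseyBound L (A n) K (range (γ n)).ncard := fun n =>
    (hu n).2 ▸ (hR n).1
  obtain ⟨L', φ, S', hL', hφ, hS'⟩ := exists_expansion_structEquiv_eq (L := L)
    (fun k => TupleEquiv γ (k := k)) tupleEquiv_equivalence
  refine ⟨L', φ, S', hL', hφ, fun B hB => ?_⟩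
  have := hB.to_subtype
  have := finite_quot_embEquiv hK hfin (X := B) fun n =>
    ((hbound n).finite_range (hγ.unavoidable n)).1
  have hclasses := embEquiv_unavoidable hK hγ (X := B)
  rw [show StructEquiv L' S' (A := B) = EmbEquiv γ from hS' B]
  exact ⟨_, hasBigRamseyDegree_card_quot embEquiv_equivalence hclasses
    fun _ δ => exists_factorsThrough_embEquiv hK hγ hbound δ, this, rfl, hclasses⟩

/-- Theorem (existence of big Ramsey structures from coherent unavoidable colorings).
Let `K = ⋃_n A_n` be a Fraïssé structure in a relational language `L` with an exhaustion by
finite substructures, each `A_n` of finite big Ramsey degree `R_n`, and suppose there are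
unavoidable `R_n`-colorings `γ_n` of `Emb(A_n,K)` with `γ_m ≪ γ_n` whenever `m ≤ n`.  Then `K`
admits a big Ramsey structure: there are a relational language `L'` containing `L` (via `φ`)
and an `L'`-structure on `K` expanding `K` which is a big Ramsey structure for `K`. -/
theorem exists_bigRamseyStructure {L : FirstOrder.Language.{u, v}} {K : Type*}
    [iK : L.Structure K] [Countable K] [L.IsRelational] [Countable L.Symbols]
    (hK : L.IsUltrahomogeneous K)
    (A : ℕ → L.Substructure K) (hmono : Monotone A)
    (hfin : ∀ n, ((A n : Set K)).Finite) (hcover : ∀ x : K, ∃ n, x ∈ A n)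
    (R : ℕ → ℕ) (hR : ∀ n, HasBigRamseyDegree (L := L) ↥(A n) K (R n))
    {C : ℕ → Type*} (γ : ∀ n, (↥(A n) ↪[L] K) → C n)
    (hu : ∀ n, UnavoidableColoring (γ n) ∧ (Set.range (γ n)).ncard = R n)
    (href : ∀ m n, m ≤ n → ∀ (f : ↥(A m) ↪[L] ↥(A n)) (s₀ s₁ : ↥(A n) ↪[L] K),
      γ n s₀ = γ n s₁ → γ m (s₀.comp f) = γ m (s₁.comp f)) :
    ∃ (L' : FirstOrder.Language.{u, v}) (φ : L →ᴸ L') (S' : L'.Structure K),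
      L'.IsRelational ∧
      @Language.LHom.IsExpansionOn L L' φ K iK S' ∧
      IsBigRamseyStructure (L := L) L' S' :=
  exists_bigRamseyStructure_general (iK := iK) hK A hmono hfin hcover R hR γ hu href
end

section
/- There exists a function γ : {(p,q) ∈ ℚ × ℚ : p < q} → Bool such that for every set S ⊆ ℚ which, with the order inherited from ℚ, is nonempty, densely ordered, and has no greatest element and no least element, γ is not constant on pairs from S: there are p < q and p' < q' with p, q, p', q' ∈ S and γ(p,q) ≠ γ(p',q'). In particular, ℚ ↛ (ℚ)²₂: not every 2-coloring of pairs of rationals admits a monochromatic subset order-isomorphic to ℚ. -/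
noncomputable def ratChain (S : Set ℚ) (r : ℚ → ℚ → Prop) (x0 : ℚ) (h0 : x0 ∈ S)
    (step : ∀ p ∈ S, ∃ q, q ∈ S ∧ r q p) : ℕ → {x : ℚ // x ∈ S}
  | 0 => ⟨x0, h0⟩
  | n + 1 =>
    let p := ratChain S r x0 h0 step n
    ⟨(step p.1 p.2).choose, (step p.1 p.2).choose_spec.1⟩

lemma ratChain_rel (S : Set ℚ) (r : ℚ → ℚ → Prop) (x0 : ℚ) (h0 : x0 ∈ S)
    (step : ∀ p ∈ S, ∃ q, q ∈ S ∧ r q p) (n : ℕ) :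
    r (ratChain S r x0 h0 step (n + 1)).1 (ratChain S r x0 h0 step n).1 :=
  (step (ratChain S r x0 h0 step n).1 (ratChain S r x0 h0 step n).2).choose_spec.2

lemma no_nat_descent (f : ℕ → ℕ) : ¬ ∀ n, f (n + 1) < f n := by
  intro h
  have key : ∀ n, f n + n ≤ f 0 := by
    intro n
    induction n with
    | zero => simp
    | succ n ih => have := h n; omega
  have := key (f 0 + 1); omega

/-- There is a 2-coloring of the pairs `p < q` of rationals such that no subset `S ⊆ ℚ` that is
nonempty, densely ordered, and without greatest or least element is monochromatic.  In particular
`ℚ ↛ (ℚ)²₂`. -/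
theorem rat_not_to_rat_pairs_two :
    ∃ γ : {pq : ℚ × ℚ // pq.1 < pq.2} → Bool,
      ∀ S : Set ℚ,
        S.Nonempty →
        (∀ p ∈ S, ∀ q ∈ S, p < q → ∃ r ∈ S, p < r ∧ r < q) →
        (∀ p ∈ S, ∃ q ∈ S, p < q) →
        (∀ p ∈ S, ∃ q ∈ S, q < p) →
        ∃ (p : ℚ) (_ : p ∈ S) (q : ℚ) (_ : q ∈ S) (p' : ℚ) (_ : p' ∈ S) (q' : ℚ)
          (_ : q' ∈ S) (hpq : p < q) (hpq' : p' < q'),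
          γ ⟨(p, q), hpq⟩ ≠ γ ⟨(p', q'), hpq'⟩ := by
  classical
  set e : ℚ → ℕ := Encodable.encode with he
  have einj : Function.Injective e := Encodable.encode_injective
  refine ⟨fun pq => decide (e pq.1.1 < e pq.1.2), ?_⟩
  intro S ⟨x0, hx0⟩ _ hup hdown
  -- ascending chain
  have stepUp : ∀ p ∈ S, ∃ q, q ∈ S ∧ p < q := by
    intro p hp; obtain ⟨q, hq, hlt⟩ := hup p hp; exact ⟨q, hq, hlt⟩
  have stepDown : ∀ p ∈ S, ∃ q, q ∈ S ∧ q < p := by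
    intro p hp; obtain ⟨q, hq, hlt⟩ := hdown p hp; exact ⟨q, hq, hlt⟩
  set g := ratChain S (fun q p => p < q) x0 hx0 stepUp with hg
  set d := ratChain S (fun q p => q < p) x0 hx0 stepDown with hd
  have gmono : ∀ n, (g n).1 < (g (n + 1)).1 := fun n =>
    ratChain_rel S (fun q p => p < q) x0 hx0 stepUp n
  have dmono : ∀ n, (d (n + 1)).1 < (d n).1 := fun n =>
    ratChain_rel S (fun q p => q < p) x0 hx0 stepDown n
  -- along the ascending chain, some step has increasing encode
  have hasc : ∃ n, e (g n).1 < e (g (n + 1)).1 := by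
    by_contra hc
    push_neg at hc
    apply no_nat_descent (fun n => e (g n).1)
    intro n
    have hne : e (g (n + 1)).1 ≠ e (g n).1 :=
      fun h => absurd (einj h) (ne_of_gt (gmono n))
    have := hc n
    omega
  -- along the descending chain, some step has increasing encode
  have hdesc : ∃ n, ¬ e (d (n + 1)).1 < e (d n).1 := by
    by_contra hc
    push_neg at hc
    exact no_nat_descent (fun n => e (d n).1) hc
  obtain ⟨m, hm⟩ := hasc
  obtain ⟨k, hk⟩ := hdesc
  refine ⟨(g m).1, (g m).2, (g (m + 1)).1, (g (m + 1)).2,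
    (d (k + 1)).1, (d (k + 1)).2, (d k).1, (d k).2, gmono m, dmono k, ?_⟩
  simp only [ne_eq, decide_eq_decide]
  intro hiff
  exact hk (hiff.mp hm)
end

section
/- Let K = ⋃_n A_n be a Fraïssé structure with an exhaustion by finite substructures, each A_n of finite big Ramsey degree R_n, and suppose γ_n is an unavoidable R_n-coloring of Emb(A_n,K) for each n, with γ_m ≪ γ_n whenever m ≤ n < ω. Then for every η ∈ Emb(K) and every N < ω there exists g ∈ Aut(K) such that for every n ≤ N and every f ∈ Emb(A_n,A_N), γ_n(η∘g∘ι_N∘f) = γ_n(ι_N∘f), where ι_N ∈ Emb(A_N,K) is the inclusion embedding and η∘g∘ι_N∘f, ι_N∘f are the evident elements of Emb(A_n,K). -/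
open FirstOrder Language Set Function

/-- Finitary form of the appendix lemma.  Let `K = ⋃_n A_n` be a Fraïssé structure with an
exhaustion by finite substructures, each `A_n` of finite big Ramsey degree `R_n`, and let
`γ_n` be unavoidable `R_n`-colorings of `Emb(A_n,K)` with `γ_m ≪ γ_n` for `m ≤ n`.  Then for
every `η ∈ Emb(K)` and every `N` there is `g ∈ Aut(K)` such that for all `n ≤ N` and all
`f ∈ Emb(A_n,A_N)`, `γ_n(η∘g∘ι_N∘f) = γ_n(ι_N∘f)`, where `ι_N : A_N → K` is the inclusion. -/
theorem exists_automorphism_fixing_colorings {L : Language} {K : Type*} [L.Structure K]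
    [Countable K] [L.IsRelational] [Countable L.Symbols]
    (hK : L.IsUltrahomogeneous K)
    (A : ℕ → L.Substructure K) (hmono : Monotone A)
    (hfin : ∀ n, ((A n : Set K)).Finite) (hcover : ∀ x : K, ∃ n, x ∈ A n)
    (R : ℕ → ℕ) (hR : ∀ n, HasBigRamseyDegree (L := L) ↥(A n) K (R n))
    {C : ℕ → Type*} (γ : ∀ n, (↥(A n) ↪[L] K) → C n)
    (hu : ∀ n, UnavoidableColoring (γ n) ∧ (Set.range (γ n)).ncard = R n)
    (href : ∀ m n, m ≤ n → ∀ (f : ↥(A m) ↪[L] ↥(A n)) (s₀ s₁ : ↥(A n) ↪[L] K),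
      γ n s₀ = γ n s₁ → γ m (s₀.comp f) = γ m (s₁.comp f)) :
    ∀ (η : K ↪[L] K) (N : ℕ), ∃ g : K ≃[L] K,
      ∀ n, n ≤ N → ∀ f : ↥(A n) ↪[L] ↥(A N),
        γ n (((η.comp g.toEmbedding).comp (A N).subtype).comp f) =
          γ n ((A N).subtype.comp f) := by
  intro η N
  -- the fiber of the color of the inclusion is nonempty, hence unavoidable
  have hfg : (A N).FG := (Substructure.fg_def).mpr ⟨A N, hfin N, Substructure.closure_eq _⟩
  set c := γ N ((A N).subtype) with hc
  have hmem : (A N).subtype ∈ γ N ⁻¹' {c} := rfl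
  have hunav : EmbUnavoidable (γ N ⁻¹' {c}) := by
    rcases (hu N).1 c with h | h
    · exact absurd (h ▸ hmem) (Set.notMem_empty _)
    · exact h
  obtain ⟨f, hf⟩ := hunav η
  obtain ⟨g, hg⟩ := hK (A N) hfg f
  refine ⟨g, fun n hn f' => ?_⟩
  have key : γ N ((η.comp g.toEmbedding).comp (A N).subtype) = γ N ((A N).subtype) := by
    have : (η.comp g.toEmbedding).comp (A N).subtype = η.comp f := by
      ext x; simp [hg]
    rw [this]; exact hf
  exact href n N hn f' _ _ key
end
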